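/- arXiv:1901.10442 — 9 statements merged into one kernel-verified Lean document; each statement's English description precedes it below -/
import Mathlib

section
/- Let W be a set and R a reflexive and symmetric binary relation on W. For subsets a, b ⊆ W define: a C_R b iff there exist x ∈ a and y ∈ b with x R y; a Ĉ_R b iff there exist x ∉ a and y ∉ b with x R y; and a ≪_R b iff there are no x ∈ a and y ∉ b with x R y. Then the bounded distributive lattice of all subsets of W (with operations ∪, ∩ and constants ∅, W) equipped with the relations C_R, Ĉ_R, ≪_R is an EDC-lattice, i.e. all 23 axioms of EDC-lattices hold. -/
/-!
On a Boolean algebra, the dual contact and the nontangential part-of relation are determined by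
the contact: `a Ĉ b ↔ aᶜ C bᶜ` and `a ≪ b ↔ ¬ a C bᶜ`. With these definitions every axiom of an
EDC-lattice follows from the five contact axioms (C1)–(C5), by splitting an argument of a contact
as `x = (x ⊓ d) ⊔ (x ⊓ dᶜ)` and using (C3); the `Ĉ`-axioms are the complements of the `C`-axioms.
For subsets of `W`, the relations `Ĉ_R` and `≪_R` are exactly of this form, and `C_R` is a contact
relation as soon as `R` is reflexive (C5) and symmetric (C4).
-/

universe u

/-- Extended distributive contact lattice (EDC-lattice): a bounded distributive
lattice with contact `C`, dual contact `Cd` and nontangential part-of `Ll`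
satisfying the 23 axioms. -/
structure EDC (D : Type u) [DistribLattice D] [BoundedOrder D] where
  C : D → D → Prop
  Cd : D → D → Prop
  Ll : D → D → Prop
  c1 : ∀ a b, C a b → a ≠ ⊥ ∧ b ≠ ⊥
  c2 : ∀ a a' b b', C a b → a ≤ a' → b ≤ b' → C a' b'
  c3 : ∀ a b c, C a (b ⊔ c) → C a b ∨ C a c
  c4 : ∀ a b, C a b → C b a
  c5 : ∀ a b, a ⊓ b ≠ ⊥ → C a b
  cd1 : ∀ a b, Cd a b → a ≠ ⊤ ∧ b ≠ ⊤
  cd2 : ∀ a a' b b', Cd a b → a' ≤ a → b' ≤ b → Cd a' b'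
  cd3 : ∀ a b c, Cd a (b ⊓ c) → Cd a b ∨ Cd a c
  cd4 : ∀ a b, Cd a b → Cd b a
  cd5 : ∀ a b, a ⊔ b ≠ ⊤ → Cd a b
  ll1 : Ll ⊥ ⊥
  ll2 : Ll ⊤ ⊤
  ll3 : ∀ a b, Ll a b → a ≤ b
  ll4 : ∀ a a' b b', a' ≤ a → Ll a b → b ≤ b' → Ll a' b'
  ll5 : ∀ a b c, Ll a c → Ll b c → Ll (a ⊔ b) c
  ll6 : ∀ a b c, Ll c a → Ll c b → Ll c (a ⊓ b)
  ll7 : ∀ a b c d, Ll a b → Ll (b ⊓ c) d → Ll c (a ⊔ d) → Ll c d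
  mc1 : ∀ a b c, C a b → Ll a c → C a (b ⊓ c)
  mc2 : ∀ a b c d, ¬ C a (b ⊓ c) → C a b → ¬ C (a ⊓ d) b → Cd d c
  mcd1 : ∀ a b c, Cd a b → Ll c a → Cd a (b ⊔ c)
  mcd2 : ∀ a b c d, ¬ Cd a (b ⊔ c) → Cd a b → ¬ Cd (a ⊔ d) b → C d c
  mll1 : ∀ a b c, ¬ Cd a b → Ll (a ⊓ c) b → Ll c b
  mll2 : ∀ a b c, ¬ C a b → Ll b (a ⊔ c) → Ll b c

/-- A filter of a bounded (distributive) lattice. -/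
def EDCFilter {D : Type u} [DistribLattice D] [BoundedOrder D] (F : Set D) : Prop :=
  ⊤ ∈ F ∧ (∀ a b : D, a ∈ F → a ≤ b → b ∈ F) ∧ (∀ a b : D, a ∈ F → b ∈ F → a ⊓ b ∈ F)

/-- An ideal of a bounded (distributive) lattice. -/
def EDCIdeal {D : Type u} [DistribLattice D] [BoundedOrder D] (I : Set D) : Prop :=
  ⊥ ∈ I ∧ (∀ a b : D, a ∈ I → b ≤ a → b ∈ I) ∧ (∀ a b : D, a ∈ I → b ∈ I → a ⊔ b ∈ I)

/-- A prime filter: a proper filter such that `a ⊔ b ∈ F` implies `a ∈ F` or `b ∈ F`. -/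
def PrimeFilter {D : Type u} [DistribLattice D] [BoundedOrder D] (F : Set D) : Prop :=
  EDCFilter F ∧ ⊥ ∉ F ∧ ∀ a b : D, a ⊔ b ∈ F → a ∈ F ∨ b ∈ F

/-- The canonical relation `R^c` between (prime) filters of an EDC-lattice. -/
def Rc {D : Type u} [DistribLattice D] [BoundedOrder D] (E : EDC D) (Γ Δ : Set D) : Prop :=
  ∀ a b : D,
    (a ∈ Γ → b ∈ Δ → E.C a b) ∧
    (a ∉ Γ → b ∉ Δ → E.Cd a b) ∧
    (a ∈ Γ → b ∉ Δ → ¬ E.Ll a b) ∧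
    (a ∉ Γ → b ∈ Δ → ¬ E.Ll b a)

section ContactAlgebra

variable {α : Type*} [BooleanAlgebra α]

structure IsContact (C : α → α → Prop) : Prop where
  ne_bot_left : ∀ {a b}, C a b → a ≠ ⊥
  mono : ∀ {a a' b b'}, C a b → a ≤ a' → b ≤ b' → C a' b'
  sup_right : ∀ {a b c}, C a (b ⊔ c) → C a b ∨ C a c
  symm : ∀ {a b}, C a b → C b a
  of_inf_ne_bot : ∀ {a b}, a ⊓ b ≠ ⊥ → C a b

def dualContact (C : α → α → Prop) (a b : α) : Prop := C aᶜ bᶜ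

def nontangential (C : α → α → Prop) (a b : α) : Prop := ¬ C a bᶜ

namespace IsContact

variable {C : α → α → Prop} {a b c d : α}

theorem ne_bot_right (hC : IsContact C) (h : C a b) : b ≠ ⊥ :=
  hC.ne_bot_left (hC.symm h)

theorem sup_left (hC : IsContact C) (h : C (a ⊔ b) c) : C a c ∨ C b c :=
  (hC.sup_right (hC.symm h)).imp hC.symm hC.symm

theorem split_left (hC : IsContact C) (d : α) (h : C a b) : C (a ⊓ d) b ∨ C (a ⊓ dᶜ) b :=
  hC.sup_left (by rwa [sup_inf_inf_compl])

theorem split_right (hC : IsContact C) (d : α) (h : C a b) : C a (b ⊓ d) ∨ C a (b ⊓ dᶜ) :=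
  hC.sup_right (by rwa [sup_inf_inf_compl])

theorem le_of_nontangential (hC : IsContact C) (h : nontangential C a b) : a ≤ b := by
  by_contra hab
  exact h (hC.of_inf_ne_bot fun hbot => hab (disjoint_compl_right_iff.1 (disjoint_iff.2 hbot)))

theorem contact_inf_of_nontangential (hC : IsContact C) (hab : C a b)
    (hac : nontangential C a c) : C a (b ⊓ c) :=
  (hC.split_right c hab).resolve_right fun h => hac (hC.mono h le_rfl inf_le_right)

theorem dualContact_of_not_contact_inf (hC : IsContact C) (habc : ¬ C a (b ⊓ c)) (hab : C a b)
    (hadb : ¬ C (a ⊓ d) b) : dualContact C d c := by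
  have hadb' : C (a ⊓ dᶜ) b := (hC.split_left d hab).resolve_left hadb
  rcases hC.split_right c hadb' with h | h
  · exact absurd (hC.mono h inf_le_left le_rfl) habc
  · exact hC.mono h inf_le_right inf_le_right

theorem nontangential_trans_sup (hC : IsContact C) (hab : nontangential C a b)
    (hbcd : nontangential C (b ⊓ c) d) (hcad : nontangential C c (a ⊔ d)) :
    nontangential C c d := by
  intro hcd
  have hcda : C c (dᶜ ⊓ a) := by
    refine (hC.split_right a hcd).resolve_right fun h => hcad ?_
    rwa [compl_sup, inf_comm]
  rcases hC.split_left b hcda with h | h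
  · exact hbcd (hC.mono h (le_of_eq (inf_comm c b)) inf_le_left)
  · exact hab (hC.symm (hC.mono h inf_le_right inf_le_right))

theorem nontangential_of_inf (hC : IsContact C) (hab : ¬ dualContact C a b)
    (hacb : nontangential C (a ⊓ c) b) : nontangential C c b := by
  intro hcb
  rcases hC.split_left a hcb with h | h
  · exact hacb (by rwa [inf_comm])
  · exact hab (hC.mono h inf_le_right le_rfl)

theorem nontangential_of_sup (hC : IsContact C) (hab : ¬ C a b)
    (hbac : nontangential C b (a ⊔ c)) : nontangential C b c := by
  intro hbc
  rcases hC.split_right a hbc with h | h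
  · exact hab (hC.symm (hC.mono h le_rfl inf_le_right))
  · exact hbac (by rwa [compl_sup, inf_comm])

end IsContact

def EDC.ofContact {C : α → α → Prop} (hC : IsContact C) : EDC α where
  C := C
  Cd := dualContact C
  Ll := nontangential C
  c1 _ _ h := ⟨hC.ne_bot_left h, hC.ne_bot_right h⟩
  c2 _ _ _ _ := hC.mono
  c3 _ _ _ := hC.sup_right
  c4 _ _ := hC.symm
  c5 _ _ := hC.of_inf_ne_bot
  cd1 _ _ h := ⟨fun ha => hC.ne_bot_left h (by rw [ha, compl_top]),
    fun hb => hC.ne_bot_right h (by rw [hb, compl_top])⟩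
  cd2 _ _ _ _ h ha hb := hC.mono h (compl_le_compl ha) (compl_le_compl hb)
  cd3 _ _ _ h := hC.sup_right (by rwa [dualContact, compl_inf] at h)
  cd4 _ _ := hC.symm
  cd5 _ _ h := hC.of_inf_ne_bot (by rwa [← compl_sup, Ne, compl_eq_bot])
  ll1 h := hC.ne_bot_left h rfl
  ll2 h := hC.ne_bot_right h compl_top
  ll3 _ _ := hC.le_of_nontangential
  ll4 _ _ _ _ ha hab hb h := hab (hC.mono h ha (compl_le_compl hb))
  ll5 _ _ _ hac hbc h := (hC.sup_left h).elim hac hbc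
  ll6 _ _ _ hca hcb h := (hC.sup_right (by rwa [compl_inf] at h)).elim hca hcb
  ll7 _ _ _ _ := hC.nontangential_trans_sup
  mc1 _ _ _ := hC.contact_inf_of_nontangential
  mc2 _ _ _ _ := hC.dualContact_of_not_contact_inf
  mcd1 a b c hab hca := by
    rw [dualContact, compl_sup]
    exact hC.contact_inf_of_nontangential hab fun h => hca (hC.symm (by rwa [compl_compl] at h))
  mcd2 a b c d habc hab hadb := by
    rw [dualContact, compl_sup] at habc hadb
    simpa only [dualContact, compl_compl] using hC.dualContact_of_not_contact_inf habc hab hadb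
  mll1 _ _ _ := hC.nontangential_of_inf
  mll2 _ _ _ := hC.nontangential_of_sup

end ContactAlgebra

def relContact {W : Type*} (R : W → W → Prop) (a b : Set W) : Prop := ∃ x ∈ a, ∃ y ∈ b, R x y

theorem isContact_relContact {W : Type*} {R : W → W → Prop} (hrefl : ∀ x, R x x)
    (hsym : ∀ x y, R x y → R y x) : IsContact (relContact R) where
  ne_bot_left := by
    rintro a b ⟨x, hx, -⟩ rfl
    exact hx
  mono := by
    rintro a a' b b' ⟨x, hx, y, hy, hxy⟩ ha hb
    exact ⟨x, ha hx, y, hb hy, hxy⟩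
  sup_right := by
    rintro a b c ⟨x, hx, y, hy | hy, hxy⟩
    · exact Or.inl ⟨x, hx, y, hy, hxy⟩
    · exact Or.inr ⟨x, hx, y, hy, hxy⟩
  symm := by
    rintro a b ⟨x, hx, y, hy, hxy⟩
    exact ⟨y, hy, x, hx, hsym x y hxy⟩
  of_inf_ne_bot := by
    intro a b hab
    obtain ⟨x, hxa, hxb⟩ := Set.nonempty_iff_ne_empty.2 hab
    exact ⟨x, hxa, x, hxb, hrefl x⟩

/-- the lattice of all subsets of `W` with the relations `C_R`, `Ĉ_R`, `≪_R`
induced by a reflexive symmetric relation `R` is an EDC-lattice. -/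
theorem stmt0 (W : Type u) (R : W → W → Prop)
    (hrefl : ∀ x, R x x) (hsym : ∀ x y, R x y → R y x) :
    ∃ E : EDC (Set W),
      (∀ a b : Set W, E.C a b ↔ ∃ x ∈ a, ∃ y ∈ b, R x y) ∧
      (∀ a b : Set W, E.Cd a b ↔ ∃ x ∉ a, ∃ y ∉ b, R x y) ∧
      (∀ a b : Set W, E.Ll a b ↔ ¬ ∃ x ∈ a, ∃ y ∉ b, R x y) :=
  ⟨EDC.ofContact (isContact_relContact hrefl hsym),
    fun _ _ => Iff.rfl, fun _ _ => Iff.rfl, fun _ _ => Iff.rfl⟩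
end

section
/- Let D be an EDC-lattice and Γ a prime filter of D. Then: (1) the set {x ∈ D : ∃y ∈ Γ, ¬(x C y)} is an ideal of D; (2) the set {x ∈ D : ∃y ∉ Γ, ¬(x Ĉ y)} is a filter of D; (3) the set {x ∈ D : ∃y ∉ Γ, x ≪ y} is an ideal of D; (4) the set {x ∈ D : ∃y ∈ Γ, y ≪ x} is a filter of D. -/
universe u

namespace EDC

variable {D : Type u} [DistribLattice D] [BoundedOrder D] (E : EDC D)

theorem C_sup_inf {a b c d : D} (h : E.C (a ⊔ b) (c ⊓ d)) : E.C a c ∨ E.C b d :=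
  (E.c3 _ _ _ (E.c4 _ _ h)).imp
    (fun h' => E.c2 _ _ _ _ (E.c4 _ _ h') le_rfl inf_le_left)
    (fun h' => E.c2 _ _ _ _ (E.c4 _ _ h') le_rfl inf_le_right)

theorem Cd_inf_sup {a b c d : D} (h : E.Cd (a ⊓ b) (c ⊔ d)) : E.Cd a c ∨ E.Cd b d :=
  (E.cd3 _ _ _ (E.cd4 _ _ h)).imp
    (fun h' => E.cd2 _ _ _ _ (E.cd4 _ _ h') le_rfl le_sup_left)
    (fun h' => E.cd2 _ _ _ _ (E.cd4 _ _ h') le_rfl le_sup_right)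

theorem Ll_sup_sup {a b c d : D} (hac : E.Ll a c) (hbd : E.Ll b d) : E.Ll (a ⊔ b) (c ⊔ d) :=
  E.ll5 _ _ _ (E.ll4 _ _ _ _ le_rfl hac le_sup_left) (E.ll4 _ _ _ _ le_rfl hbd le_sup_right)

theorem Ll_inf_inf {a b c d : D} (hac : E.Ll a c) (hbd : E.Ll b d) : E.Ll (a ⊓ b) (c ⊓ d) :=
  E.ll6 _ _ _ (E.ll4 _ _ _ _ inf_le_left hac le_rfl) (E.ll4 _ _ _ _ inf_le_right hbd le_rfl)

section

variable {F : Set D} (htop : ⊤ ∈ F) (hinf : ∀ a b, a ∈ F → b ∈ F → a ⊓ b ∈ F)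
include htop hinf

theorem edcIdeal_setOf_not_C : EDCIdeal {x : D | ∃ y ∈ F, ¬ E.C x y} := by
  refine ⟨⟨⊤, htop, fun h => (E.c1 _ _ h).1 rfl⟩, ?_, ?_⟩
  · rintro a b ⟨y, hy, hay⟩ hba
    exact ⟨y, hy, fun hby => hay (E.c2 _ _ _ _ hby hba le_rfl)⟩
  · rintro a b ⟨y₁, hy₁, hay₁⟩ ⟨y₂, hy₂, hby₂⟩
    exact ⟨y₁ ⊓ y₂, hinf _ _ hy₁ hy₂, fun h => (E.C_sup_inf h).elim hay₁ hby₂⟩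

theorem edcFilter_setOf_Ll : EDCFilter {x : D | ∃ y ∈ F, E.Ll y x} := by
  refine ⟨⟨⊤, htop, E.ll2⟩, ?_, ?_⟩
  · rintro a b ⟨y, hy, hya⟩ hab
    exact ⟨y, hy, E.ll4 _ _ _ _ le_rfl hya hab⟩
  · rintro a b ⟨y₁, hy₁, hy₁a⟩ ⟨y₂, hy₂, hy₂b⟩
    exact ⟨y₁ ⊓ y₂, hinf _ _ hy₁ hy₂, E.Ll_inf_inf hy₁a hy₂b⟩

end

section

variable {I : Set D} (hbot : ⊥ ∈ I) (hsup : ∀ a b, a ∈ I → b ∈ I → a ⊔ b ∈ I)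
include hbot hsup

theorem edcFilter_setOf_not_Cd : EDCFilter {x : D | ∃ y ∈ I, ¬ E.Cd x y} := by
  refine ⟨⟨⊥, hbot, fun h => (E.cd1 _ _ h).1 rfl⟩, ?_, ?_⟩
  · rintro a b ⟨y, hy, hay⟩ hab
    exact ⟨y, hy, fun hby => hay (E.cd2 _ _ _ _ hby hab le_rfl)⟩
  · rintro a b ⟨y₁, hy₁, hay₁⟩ ⟨y₂, hy₂, hby₂⟩
    exact ⟨y₁ ⊔ y₂, hsup _ _ hy₁ hy₂, fun h => (E.Cd_inf_sup h).elim hay₁ hby₂⟩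

theorem edcIdeal_setOf_Ll : EDCIdeal {x : D | ∃ y ∈ I, E.Ll x y} := by
  refine ⟨⟨⊥, hbot, E.ll1⟩, ?_, ?_⟩
  · rintro a b ⟨y, hy, hay⟩ hba
    exact ⟨y, hy, E.ll4 _ _ _ _ hba hay le_rfl⟩
  · rintro a b ⟨y₁, hy₁, hay₁⟩ ⟨y₂, hy₂, hby₂⟩
    exact ⟨y₁ ⊔ y₂, hsup _ _ hy₁ hy₂, E.Ll_sup_sup hay₁ hby₂⟩

end

end EDC

theorem PrimeFilter.sup_notMem {D : Type u} [DistribLattice D] [BoundedOrder D] {Γ : Set D}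
    (hΓ : PrimeFilter Γ) {a b : D} (ha : a ∉ Γ) (hb : b ∉ Γ) : a ⊔ b ∉ Γ :=
  fun h => (hΓ.2.2 a b h).elim ha hb

/-- the four sets determined by a prime filter `Γ` are ideals/filters. -/
theorem stmt3 {D : Type u} [DistribLattice D] [BoundedOrder D] (E : EDC D)
    (Γ : Set D) (hΓ : PrimeFilter Γ) :
    EDCIdeal {x : D | ∃ y ∈ Γ, ¬ E.C x y} ∧
    EDCFilter {x : D | ∃ y ∉ Γ, ¬ E.Cd x y} ∧
    EDCIdeal {x : D | ∃ y ∉ Γ, E.Ll x y} ∧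
    EDCFilter {x : D | ∃ y ∈ Γ, E.Ll y x} := by
  have hsup : ∀ a b, a ∈ Γᶜ → b ∈ Γᶜ → a ⊔ b ∈ Γᶜ := fun _ _ => hΓ.sup_notMem
  obtain ⟨⟨htop, -, hinf⟩, hbot, -⟩ := hΓ
  exact ⟨E.edcIdeal_setOf_not_C htop hinf, E.edcFilter_setOf_not_Cd hbot hsup,
    E.edcIdeal_setOf_Ll hbot hsup, E.edcFilter_setOf_Ll htop hinf⟩
end

section
/- Let D be an EDC-lattice. The canonical relation R^c on prime filters of D is reflexive and symmetric. -/
universe u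

namespace PrimeFilter

variable {D : Type u} [DistribLattice D] [BoundedOrder D] {Γ : Set D}

theorem inf_ne_bot (hΓ : PrimeFilter Γ) {a b : D} (ha : a ∈ Γ) (hb : b ∈ Γ) : a ⊓ b ≠ ⊥ :=
  fun h => hΓ.2.1 (h ▸ hΓ.1.2.2 a b ha hb)

theorem sup_ne_top (hΓ : PrimeFilter Γ) {a b : D} (ha : a ∉ Γ) (hb : b ∉ Γ) : a ⊔ b ≠ ⊤ :=
  fun h => (hΓ.2.2 a b (h ▸ hΓ.1.1)).elim ha hb

theorem not_ll_of_mem_of_not_mem (hΓ : PrimeFilter Γ) (E : EDC D) {a b : D} (ha : a ∈ Γ)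
    (hb : b ∉ Γ) : ¬ E.Ll a b :=
  fun hab => hb (hΓ.1.2.1 a b ha (E.ll3 a b hab))

theorem rc_self (hΓ : PrimeFilter Γ) (E : EDC D) : Rc E Γ Γ := fun a b =>
  ⟨fun ha hb => E.c5 a b (hΓ.inf_ne_bot ha hb),
    fun ha hb => E.cd5 a b (hΓ.sup_ne_top ha hb),
    hΓ.not_ll_of_mem_of_not_mem E,
    fun ha hb => hΓ.not_ll_of_mem_of_not_mem E hb ha⟩

end PrimeFilter

theorem Rc.symm {D : Type u} [DistribLattice D] [BoundedOrder D] {E : EDC D} {Γ Δ : Set D}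
    (h : Rc E Γ Δ) : Rc E Δ Γ := fun a b =>
  let ⟨hC, hCd, hLl, hLl'⟩ := h b a
  ⟨fun ha hb => E.c4 b a (hC hb ha), fun ha hb => E.cd4 b a (hCd hb ha),
    fun ha hb => hLl' hb ha, fun ha hb => hLl hb ha⟩

/-- the canonical relation `R^c` is reflexive and symmetric on prime filters. -/
theorem stmt4 {D : Type u} [DistribLattice D] [BoundedOrder D] (E : EDC D) :
    (∀ Γ : Set D, PrimeFilter Γ → Rc E Γ Γ) ∧
    (∀ Γ Δ : Set D, PrimeFilter Γ → PrimeFilter Δ → Rc E Γ Δ → Rc E Δ Γ) :=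
  ⟨fun _ hΓ => hΓ.rc_self E, fun _ _ _ _ h => h.symm⟩
end

section
/- Let D be an EDC-lattice and a, b ∈ D. Then a C b if and only if there exist prime filters Γ and Δ of D such that a ∈ Γ, b ∈ Δ and Γ R^c Δ. -/
universe u

/-! The principal filters of `a` and `b` are linked by `C`. Enlarge the first to a filter `Γ`
maximal among those linked with the second, then the second to a filter `Δ` maximal among those
linked with `Γ`; `Γ` stays maximal. Maximality means that every `x ∉ Γ` comes with `f ∈ Γ`,
`g ∈ Δ` such that `¬ (f ⊓ x) C g`, and symmetrically for `Δ`. With these witnesses, primality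
follows from (C3), `x ∉ Γ, y ∉ Δ → x Ĉ y` from (MC2), and `x ∈ Γ, y ∉ Δ → ¬ x ≪ y` from (MC1). -/

variable {D : Type u} [DistribLattice D] [BoundedOrder D]

namespace EDCFilter

theorem principal (a : D) : EDCFilter {x | a ≤ x} :=
  ⟨le_top, fun _ _ hu huv => hu.trans huv, fun _ _ hu hv => le_inf hu hv⟩

variable {F : Set D}

theorem top_mem (hF : EDCFilter F) : ⊤ ∈ F := hF.1

theorem mem_of_le (hF : EDCFilter F) {x y : D} (hx : x ∈ F) (hxy : x ≤ y) : y ∈ F :=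
  hF.2.1 x y hx hxy

theorem inf_mem (hF : EDCFilter F) {x y : D} (hx : x ∈ F) (hy : y ∈ F) : x ⊓ y ∈ F :=
  hF.2.2 x y hx hy

theorem adjoin (hF : EDCFilter F) (x : D) : EDCFilter {z | ∃ f ∈ F, f ⊓ x ≤ z} := by
  refine ⟨⟨⊤, hF.top_mem, le_top⟩, ?_, ?_⟩
  · rintro u v ⟨f, hf, hfu⟩ huv
    exact ⟨f, hf, hfu.trans huv⟩
  · rintro u v ⟨f, hf, hfu⟩ ⟨f', hf', hf'v⟩
    refine ⟨f ⊓ f', hF.inf_mem hf hf', le_inf ?_ ?_⟩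
    · exact (inf_le_inf_right x inf_le_left).trans hfu
    · exact (inf_le_inf_right x inf_le_right).trans hf'v

theorem sUnion_of_isChain {c : Set (Set D)} (hc : ∀ F ∈ c, EDCFilter F)
    (hchain : IsChain (· ⊆ ·) c) (hne : c.Nonempty) : EDCFilter (⋃₀ c) := by
  obtain ⟨F₀, hF₀⟩ := hne
  refine ⟨⟨F₀, hF₀, (hc F₀ hF₀).top_mem⟩, ?_, ?_⟩
  · rintro u v ⟨F, hF, hu⟩ huv
    exact ⟨F, hF, (hc F hF).mem_of_le hu huv⟩
  · rintro u v ⟨F, hF, hu⟩ ⟨G, hG, hv⟩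
    rcases hchain.total hF hG with hFG | hGF
    · exact ⟨G, hG, (hc G hG).inf_mem (hFG hu) hv⟩
    · exact ⟨F, hF, (hc F hF).inf_mem hu (hGF hv)⟩

end EDCFilter

namespace EDC

variable (E : EDC D)

def Linked (Γ Δ : Set D) : Prop := ∀ x ∈ Γ, ∀ y ∈ Δ, E.C x y

def Saturated (Γ Δ : Set D) : Prop := ∀ x ∉ Γ, ∃ f ∈ Γ, ∃ g ∈ Δ, ¬ E.C (f ⊓ x) g

variable {E} {Γ Δ : Set D}

theorem Linked.symm (h : E.Linked Γ Δ) : E.Linked Δ Γ :=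
  fun y hy x hx => E.c4 x y (h x hx y hy)

theorem Saturated.mono_right {Δ' : Set D} (h : E.Saturated Γ Δ) (hΔ : Δ ⊆ Δ') :
    E.Saturated Γ Δ' := fun x hx =>
  let ⟨f, hf, g, hg, hfg⟩ := h x hx
  ⟨f, hf, g, hΔ hg, hfg⟩

theorem linked_principal {a b : D} (hab : E.C a b) :
    E.Linked {x | a ≤ x} {y | b ≤ y} :=
  fun x hx y hy => E.c2 a x b y hab hx hy

theorem exists_maximal_linked {Γ₀ : Set D} (hΓ₀ : EDCFilter Γ₀) (hlink : E.Linked Γ₀ Δ) :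
    ∃ Γ, Γ₀ ⊆ Γ ∧ Maximal (fun F => EDCFilter F ∧ E.Linked F Δ) Γ := by
  refine zorn_subset_nonempty _ (fun c hc hchain hne => ?_) Γ₀ ⟨hΓ₀, hlink⟩
  refine ⟨⋃₀ c, ⟨EDCFilter.sUnion_of_isChain (fun F hF => (hc hF).1) hchain hne, ?_⟩,
    fun F hF => Set.subset_sUnion_of_mem hF⟩
  rintro x ⟨F, hF, hx⟩
  exact (hc hF).2 x hx

theorem saturated_of_maximal (hΓ : Maximal (fun F => EDCFilter F ∧ E.Linked F Δ) Γ) :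
    E.Saturated Γ Δ := by
  intro x hx
  by_contra! hsep
  have hlink : E.Linked {z | ∃ f ∈ Γ, f ⊓ x ≤ z} Δ := by
    rintro z ⟨f, hf, hfz⟩ g hg
    exact E.c2 _ z g g (hsep f hf g hg) hfz le_rfl
  have hsub : Γ ⊆ {z | ∃ f ∈ Γ, f ⊓ x ≤ z} := fun f hf => ⟨f, hf, inf_le_left⟩
  exact hx (hΓ.2 ⟨hΓ.1.1.adjoin x, hlink⟩ hsub ⟨⊤, hΓ.1.1.top_mem, inf_le_right⟩)

theorem exists_saturated_pair {a b : D} (hab : E.C a b) :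
    ∃ Γ Δ, EDCFilter Γ ∧ EDCFilter Δ ∧ a ∈ Γ ∧ b ∈ Δ ∧
      E.Linked Γ Δ ∧ E.Saturated Γ Δ ∧ E.Saturated Δ Γ := by
  obtain ⟨Γ, haΓ, hΓ⟩ := exists_maximal_linked (EDCFilter.principal a) (linked_principal hab)
  obtain ⟨Δ, hbΔ, hΔ⟩ := exists_maximal_linked (EDCFilter.principal b) hΓ.1.2.symm
  refine ⟨Γ, Δ, hΓ.1.1, hΔ.1.1, haΓ le_rfl, hbΔ le_rfl, hΔ.1.2.symm, ?_, saturated_of_maximal hΔ⟩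
  exact (saturated_of_maximal hΓ).mono_right hbΔ

theorem primeFilter_of_saturated (hΓ : EDCFilter Γ) (hΔ : EDCFilter Δ)
    (hlink : E.Linked Γ Δ) (hsat : E.Saturated Γ Δ) : PrimeFilter Γ := by
  refine ⟨hΓ, fun hbot => (E.c1 ⊥ ⊤ (hlink ⊥ hbot ⊤ hΔ.top_mem)).1 rfl, fun x y hxy => ?_⟩
  by_contra! hxy'
  obtain ⟨f₁, hf₁, g₁, hg₁, hx⟩ := hsat x hxy'.1
  obtain ⟨f₂, hf₂, g₂, hg₂, hy⟩ := hsat y hxy'.2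
  have hC : E.C (f₁ ⊓ f₂ ⊓ x ⊔ f₁ ⊓ f₂ ⊓ y) (g₁ ⊓ g₂) := by
    rw [← inf_sup_left]
    exact hlink _ (hΓ.inf_mem (hΓ.inf_mem hf₁ hf₂) hxy) _ (hΔ.inf_mem hg₁ hg₂)
  rcases E.c3 _ _ _ (E.c4 _ _ hC) with hC | hC
  · exact hx (E.c2 _ _ _ _ (E.c4 _ _ hC) (inf_le_inf_right x inf_le_left) inf_le_left)
  · exact hy (E.c2 _ _ _ _ (E.c4 _ _ hC) (inf_le_inf_right y inf_le_right) inf_le_right)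

theorem cd_of_saturated (hΓ : EDCFilter Γ) (hΔ : EDCFilter Δ) (hlink : E.Linked Γ Δ)
    (hsatΓ : E.Saturated Γ Δ) (hsatΔ : E.Saturated Δ Γ)
    {x y : D} (hx : x ∉ Γ) (hy : y ∉ Δ) : E.Cd x y := by
  obtain ⟨f₁, hf₁, g₁, hg₁, hfx⟩ := hsatΓ x hx
  obtain ⟨g₂, hg₂, f₂, hf₂, hgy⟩ := hsatΔ y hy
  refine E.mc2 (f₁ ⊓ f₂) (g₁ ⊓ g₂) y x (fun h => hgy ?_)
    (hlink _ (hΓ.inf_mem hf₁ hf₂) _ (hΔ.inf_mem hg₁ hg₂)) (fun h => hfx ?_)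
  · exact E.c4 _ _ (E.c2 _ _ _ _ h inf_le_right (inf_le_inf_right y inf_le_right))
  · exact E.c2 _ _ _ _ h (inf_le_inf_right x inf_le_left) inf_le_left

theorem not_ll_of_saturated (hΓ : EDCFilter Γ) (hlink : E.Linked Γ Δ)
    (hsat : E.Saturated Δ Γ) {x y : D} (hx : x ∈ Γ) (hy : y ∉ Δ) :
    ¬ E.Ll x y := by
  intro hxy
  obtain ⟨g, hg, f, hf, hgy⟩ := hsat y hy
  have hC : E.C (f ⊓ x) (g ⊓ y) :=
    E.mc1 _ _ _ (hlink _ (hΓ.inf_mem hf hx) _ hg) (E.ll4 x _ y y inf_le_right hxy le_rfl)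
  exact hgy (E.c4 _ _ (E.c2 _ _ _ _ hC inf_le_left le_rfl))

theorem rc_of_saturated (hΓ : EDCFilter Γ) (hΔ : EDCFilter Δ) (hlink : E.Linked Γ Δ)
    (hsatΓ : E.Saturated Γ Δ) (hsatΔ : E.Saturated Δ Γ) : Rc E Γ Δ :=
  fun _ _ =>
    ⟨fun hx hy => hlink _ hx _ hy, cd_of_saturated hΓ hΔ hlink hsatΓ hsatΔ,
      not_ll_of_saturated hΓ hlink hsatΔ,
      fun hx hy => not_ll_of_saturated hΔ hlink.symm hsatΓ hy hx⟩

end EDC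

/-- `a C b` iff there are prime filters `Γ R^c Δ` with `a ∈ Γ`, `b ∈ Δ`. -/
theorem stmt5 {D : Type u} [DistribLattice D] [BoundedOrder D] (E : EDC D) (a b : D) :
    E.C a b ↔ ∃ Γ Δ : Set D, PrimeFilter Γ ∧ PrimeFilter Δ ∧ a ∈ Γ ∧ b ∈ Δ ∧ Rc E Γ Δ := by
  refine ⟨fun hab => ?_, fun ⟨Γ, Δ, _, _, ha, hb, hR⟩ => (hR a b).1 ha hb⟩
  obtain ⟨Γ, Δ, hΓ, hΔ, ha, hb, hlink, hsatΓ, hsatΔ⟩ := EDC.exists_saturated_pair hab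
  exact ⟨Γ, Δ, EDC.primeFilter_of_saturated hΓ hΔ hlink hsatΓ,
    EDC.primeFilter_of_saturated hΔ hΓ hlink.symm hsatΔ, ha, hb,
    EDC.rc_of_saturated hΓ hΔ hlink hsatΓ hsatΔ⟩
end

section
/- Let D be an EDC-lattice and a, b ∈ D. Then: (1) a Ĉ b if and only if there exist prime filters Γ and Δ of D such that a ∉ Γ, b ∉ Δ and Γ R^c Δ; (2) ¬(b ≪ a) if and only if there exist prime filters Γ and Δ of D such that a ∉ Γ, b ∈ Δ and Γ R^c Δ. -/
universe u

/-!
The implications from right to left are clauses of the definition of `R^c`. Conversely, by Zorn's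
lemma `(↓a, ↓b)` extends to a maximal pair of ideals `(I, J)` with `I × J ⊆ Ĉ` for (1), and to a
maximal pair of an ideal `I ∋ a` and a filter `F ∋ b` with no `g ≪ i` (`g ∈ F`, `i ∈ I`) for (2).
Maximality means that adjoining any `x ∉ I` to `I` breaks the relation at some `i ⊔ x`, `j`, and
similarly for the second component. With (Ĉ3), resp. (≪5) and (≪6), these witnesses make the
ideals prime, and with the mixed axioms they yield the clauses of `Γ R^c Δ` for `Γ = Iᶜ` and
`Δ = Jᶜ`, resp. `Δ = F`.
-/

open OrderDual

section AntitoneRel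

variable {α β : Type*} [LE α] [LE β]

def AntitoneRel (R : α → β → Prop) : Prop :=
  ∀ ⦃i i' j j'⦄, i' ≤ i → j' ≤ j → R i j → R i' j'

theorem AntitoneRel.flip {R : α → β → Prop} (hR : AntitoneRel R) : AntitoneRel (flip R) :=
  fun _ _ _ _ hj hi h => hR hi hj h

end AntitoneRel

section Ideals

variable {α β : Type*} [DistribLattice α] [BoundedOrder α] [DistribLattice β] [BoundedOrder β]

namespace EDCIdeal

variable {I : Set α}

theorem bot_mem (hI : EDCIdeal I) : ⊥ ∈ I := hI.1

theorem mem_of_le (hI : EDCIdeal I) {x y : α} (hx : x ∈ I) (hyx : y ≤ x) : y ∈ I :=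
  hI.2.1 x y hx hyx

theorem sup_mem (hI : EDCIdeal I) {x y : α} (hx : x ∈ I) (hy : y ∈ I) : x ⊔ y ∈ I :=
  hI.2.2 x y hx hy

theorem setOf_le (a : α) : EDCIdeal {x | x ≤ a} :=
  ⟨bot_le, fun _ _ hx hyx => hyx.trans hx, fun _ _ => sup_le⟩

theorem biUnion {ι : Type*} {c : Set ι} {f : ι → Set α} (hne : c.Nonempty)
    (hdir : DirectedOn (fun p q => f p ⊆ f q) c) (hf : ∀ p ∈ c, EDCIdeal (f p)) :
    EDCIdeal (⋃ p ∈ c, f p) := by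
  obtain ⟨p, hp⟩ := hne
  simp only [EDCIdeal, Set.mem_iUnion₂, exists_prop]
  refine ⟨⟨p, hp, (hf p hp).bot_mem⟩, ?_, ?_⟩
  · rintro x y ⟨q, hq, hx⟩ hyx
    exact ⟨q, hq, (hf q hq).mem_of_le hx hyx⟩
  · rintro x y ⟨q, hq, hx⟩ ⟨r, hr, hy⟩
    obtain ⟨s, hs, hqs, hrs⟩ := hdir q hq r hr
    exact ⟨s, hs, (hf s hs).sup_mem (hqs hx) (hrs hy)⟩

theorem adjoin (hI : EDCIdeal I) (x : α) : EDCIdeal {z | ∃ i ∈ I, z ≤ i ⊔ x} := by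
  refine ⟨⟨⊥, hI.bot_mem, bot_le⟩, ?_, ?_⟩
  · rintro u v ⟨i, hi, hu⟩ hvu
    exact ⟨i, hi, hvu.trans hu⟩
  · rintro u v ⟨i, hi, hu⟩ ⟨i', hi', hv⟩
    exact ⟨i ⊔ i', hI.sup_mem hi hi', sup_le (hu.trans (sup_le_sup_right le_sup_left x))
      (hv.trans (sup_le_sup_right le_sup_right x))⟩

end EDCIdeal

structure PrimeIdeal (I : Set α) : Prop where
  ideal : EDCIdeal I
  top_not_mem : ⊤ ∉ I
  mem_or_mem : ∀ x y, x ⊓ y ∈ I → x ∈ I ∨ y ∈ I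

theorem PrimeIdeal.primeFilter_compl {I : Set α} (hI : PrimeIdeal I) : PrimeFilter Iᶜ := by
  refine ⟨⟨hI.top_not_mem, fun x y hx hxy hy => hx (hI.ideal.mem_of_le hy hxy),
    fun x y hx hy hxy => (hI.mem_or_mem x y hxy).elim hx hy⟩,
    Set.notMem_compl_iff.2 hI.ideal.bot_mem, fun x y hxy => ?_⟩
  by_contra! h
  exact hxy (hI.ideal.sup_mem (Set.notMem_compl_iff.1 h.1) (Set.notMem_compl_iff.1 h.2))

theorem PrimeIdeal.primeFilter_preimage_toDual {J : Set αᵒᵈ} (hJ : PrimeIdeal J) :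
    PrimeFilter (toDual ⁻¹' J) :=
  ⟨hJ.ideal, hJ.top_not_mem, hJ.mem_or_mem⟩

structure IdealPair (R : α → β → Prop) (a : α) (b : β) (p : Set α × Set β) : Prop where
  ideal_fst : EDCIdeal p.1
  ideal_snd : EDCIdeal p.2
  mem_fst : a ∈ p.1
  mem_snd : b ∈ p.2
  rel : ∀ i ∈ p.1, ∀ j ∈ p.2, R i j

namespace IdealPair

variable {R : α → β → Prop} {a : α} {b : β} {m : Set α × Set β}

theorem swap (h : IdealPair R a b m) : IdealPair (flip R) b a m.swap :=
  ⟨h.ideal_snd, h.ideal_fst, h.mem_snd, h.mem_fst, fun j hj i hi => h.rel i hi j hj⟩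

theorem maximal_swap (hm : Maximal (IdealPair R a b) m) :
    Maximal (IdealPair (flip R) b a) m.swap :=
  ⟨hm.prop.swap, fun _ hq hle =>
    Prod.swap_le_swap.1 (hm.le_of_ge hq.swap (Prod.swap_le_swap.2 hle))⟩

theorem exists_upperBound_of_isChain {c : Set (Set α × Set β)}
    (hc : ∀ q ∈ c, IdealPair R a b q) (hchain : IsChain (· ≤ ·) c) (hne : c.Nonempty) :
    ∃ ub, IdealPair R a b ub ∧ ∀ q ∈ c, q ≤ ub := by
  obtain ⟨p, hp⟩ := hne
  have hdir := hchain.directedOn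
  refine ⟨(⋃ q ∈ c, q.1, ⋃ q ∈ c, q.2), ⟨?_, ?_, ?_, ?_, ?_⟩,
    fun q hq => ⟨Set.subset_biUnion_of_mem hq, Set.subset_biUnion_of_mem hq⟩⟩
  · exact .biUnion ⟨p, hp⟩ (hdir.mono fun _ _ h => h.1) fun q hq => (hc q hq).ideal_fst
  · exact .biUnion ⟨p, hp⟩ (hdir.mono fun _ _ h => h.2) fun q hq => (hc q hq).ideal_snd
  · exact Set.mem_biUnion hp (hc p hp).mem_fst
  · exact Set.mem_biUnion hp (hc p hp).mem_snd
  · simp only [Set.mem_iUnion₂, exists_prop]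
    rintro i ⟨q, hq, hi⟩ j ⟨r, hr, hj⟩
    obtain ⟨s, hs, hqs, hrs⟩ := hdir q hq r hr
    exact (hc s hs).rel i (hqs.1 hi) j (hrs.2 hj)

theorem exists_maximal (hR : AntitoneRel R) (hab : R a b) :
    ∃ m, Maximal (IdealPair R a b) m := by
  obtain ⟨m, -, hm⟩ := zorn_le_nonempty₀ {p | IdealPair R a b p}
    (fun c hc hchain p hp => exists_upperBound_of_isChain hc hchain ⟨p, hp⟩)
    ({x | x ≤ a}, {y | y ≤ b})
    ⟨.setOf_le a, .setOf_le b, le_rfl, le_rfl, fun i hi j hj => hR hi hj hab⟩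
  exact ⟨m, hm⟩

theorem exists_not_left (hR : AntitoneRel R) (hm : Maximal (IdealPair R a b) m) {x : α}
    (hx : x ∉ m.1) :
    ∃ i ∈ m.1, ∃ j ∈ m.2, ¬ R (i ⊔ x) j := by
  by_contra! h
  have hext : IdealPair R a b ({z | ∃ i ∈ m.1, z ≤ i ⊔ x}, m.2) :=
    ⟨hm.prop.ideal_fst.adjoin x, hm.prop.ideal_snd, ⟨a, hm.prop.mem_fst, le_sup_left⟩,
      hm.prop.mem_snd, fun z ⟨i, hi, hz⟩ j hj => hR hz le_rfl (h i hi j hj)⟩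
  have hle := hm.le_of_ge hext ⟨fun z hz => ⟨z, hz, le_sup_left⟩, le_rfl⟩
  exact hx (hle.1 ⟨⊥, hm.prop.ideal_fst.bot_mem, le_sup_right⟩)

theorem exists_not_right (hR : AntitoneRel R) (hm : Maximal (IdealPair R a b) m) {y : β}
    (hy : y ∉ m.2) :
    ∃ i ∈ m.1, ∃ j ∈ m.2, ¬ R i (j ⊔ y) := by
  obtain ⟨j, hj, i, hi, h⟩ := exists_not_left hR.flip (maximal_swap hm) hy
  exact ⟨i, hi, j, hj, h⟩

theorem exists_not_left_right (hR : AntitoneRel R) (hm : Maximal (IdealPair R a b) m)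
    {x : α} {y : β} (hx : x ∉ m.1) (hy : y ∉ m.2) :
    ∃ i ∈ m.1, ∃ j ∈ m.2, R i j ∧ ¬ R (i ⊔ x) j ∧ ¬ R i (j ⊔ y) := by
  obtain ⟨i₁, hi₁, j₁, hj₁, h₁⟩ := exists_not_left hR hm hx
  obtain ⟨i₂, hi₂, j₂, hj₂, h₂⟩ := exists_not_right hR hm hy
  have hi := hm.prop.ideal_fst.sup_mem hi₁ hi₂
  have hj := hm.prop.ideal_snd.sup_mem hj₁ hj₂
  exact ⟨_, hi, _, hj, hm.prop.rel _ hi _ hj,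
    fun h => h₁ (hR (sup_le_sup_right le_sup_left x) le_sup_left h),
    fun h => h₂ (hR le_sup_right (sup_le_sup_right le_sup_right y) h)⟩

theorem primeIdeal_fst (hR : AntitoneRel R) (hsplit : ∀ p q j, R (p ⊓ q) j → R p j ∨ R q j)
    (htop : ¬ R ⊤ ⊥) (hm : Maximal (IdealPair R a b) m) : PrimeIdeal m.1 := by
  obtain ⟨hI, hJ, -, -, hIJ⟩ := hm.prop
  refine ⟨hI, fun h => htop (hIJ ⊤ h ⊥ hJ.bot_mem), fun x y hxy => ?_⟩
  by_contra! hn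
  obtain ⟨i₁, hi₁, j₁, hj₁, h₁⟩ := exists_not_left hR hm hn.1
  obtain ⟨i₂, hi₂, j₂, hj₂, h₂⟩ := exists_not_left hR hm hn.2
  have h := hIJ _ (hI.sup_mem (hI.sup_mem hi₁ hi₂) hxy) _ (hJ.sup_mem hj₁ hj₂)
  rw [sup_inf_left] at h
  rcases hsplit _ _ _ h with h | h
  · exact h₁ (hR (sup_le_sup_right le_sup_left x) le_sup_left h)
  · exact h₂ (hR (sup_le_sup_right le_sup_right y) le_sup_right h)

theorem primeIdeal_snd (hR : AntitoneRel R) (hsplit : ∀ i p q, R i (p ⊓ q) → R i p ∨ R i q)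
    (htop : ¬ R ⊥ ⊤) (hm : Maximal (IdealPair R a b) m) : PrimeIdeal m.2 :=
  primeIdeal_fst hR.flip (fun p q i => hsplit i p q) htop (maximal_swap hm)

end IdealPair

end Ideals

namespace EDC

variable {D : Type u} [DistribLattice D] [BoundedOrder D] (E : EDC D)

theorem antitoneRel_cd : AntitoneRel E.Cd :=
  fun i i' j j' hi hj h => E.cd2 i i' j j' h hi hj

theorem flip_cd : flip E.Cd = E.Cd :=
  funext₂ fun a b => propext ⟨E.cd4 b a, E.cd4 a b⟩

variable {E} {a b : D} {m : Set D × Set D}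

theorem c_of_maximal_cd (hm : Maximal (IdealPair E.Cd a b) m) {x y : D} (hx : x ∉ m.1)
    (hy : y ∉ m.2) : E.C x y := by
  obtain ⟨i, -, j, -, hij, hix, hjy⟩ :=
    IdealPair.exists_not_left_right E.antitoneRel_cd hm hx hy
  exact E.mcd2 i j y x hjy hij hix

theorem not_ll_of_maximal_cd (hm : Maximal (IdealPair E.Cd a b) m) {x y : D} (hx : x ∉ m.1)
    (hy : y ∈ m.2) : ¬ E.Ll x y := by
  intro hxy
  obtain ⟨i, hi, j, hj, hix⟩ := IdealPair.exists_not_left E.antitoneRel_cd hm hx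
  have hjy : j ⊔ y ∈ m.2 := hm.prop.ideal_snd.sup_mem hj hy
  have hxjy : E.Ll x (j ⊔ y) := E.ll4 _ _ _ _ le_rfl hxy le_sup_right
  have h := E.mcd1 _ i x (E.cd4 _ _ (hm.prop.rel i hi _ hjy)) hxjy
  exact hix (E.cd2 _ _ _ _ (E.cd4 _ _ h) le_rfl le_sup_left)

theorem primeIdeal_fst_of_maximal_cd (hm : Maximal (IdealPair E.Cd a b) m) : PrimeIdeal m.1 :=
  IdealPair.primeIdeal_fst E.antitoneRel_cd
    (fun p q j h => (E.cd3 j p q (E.cd4 _ _ h)).imp (E.cd4 _ _) (E.cd4 _ _))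
    (fun h => (E.cd1 _ _ h).1 rfl) hm

theorem primeIdeal_snd_of_maximal_cd (hm : Maximal (IdealPair E.Cd a b) m) : PrimeIdeal m.2 :=
  IdealPair.primeIdeal_snd E.antitoneRel_cd E.cd3 (fun h => (E.cd1 _ _ h).2 rfl) hm

theorem exists_rc_of_cd (hab : E.Cd a b) :
    ∃ Γ Δ : Set D,
      PrimeFilter Γ ∧ PrimeFilter Δ ∧ a ∉ Γ ∧ b ∉ Δ ∧ Rc E Γ Δ := by
  obtain ⟨m, hm⟩ := IdealPair.exists_maximal E.antitoneRel_cd hab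
  have hm' : Maximal (IdealPair E.Cd b a) m.swap := E.flip_cd ▸ IdealPair.maximal_swap hm
  refine ⟨m.1ᶜ, m.2ᶜ, (primeIdeal_fst_of_maximal_cd hm).primeFilter_compl,
    (primeIdeal_snd_of_maximal_cd hm).primeFilter_compl, Set.notMem_compl_iff.2 hm.prop.mem_fst,
    Set.notMem_compl_iff.2 hm.prop.mem_snd, fun x y => ?_⟩
  simp only [Set.mem_compl_iff, not_not]
  exact ⟨c_of_maximal_cd hm, (hm.prop.rel x · y ·), not_ll_of_maximal_cd hm,
    fun hx hy => not_ll_of_maximal_cd hm' hy hx⟩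

/-- A filter of `D` is an ideal of `Dᵒᵈ`, so the ideal–filter pairs of (2) are the ideal pairs
of this relation. -/
def NotLlDual (i : D) (g : Dᵒᵈ) : Prop := ¬ E.Ll (ofDual g) i

theorem antitoneRel_notLlDual : AntitoneRel E.NotLlDual :=
  fun _ _ _ _ hi hg h hll => h (E.ll4 _ _ _ _ hg hll hi)

variable {m : Set D × Set Dᵒᵈ}

theorem c_of_maximal_notLlDual (hm : Maximal (IdealPair E.NotLlDual a (toDual b)) m) {x y : D}
    (hx : x ∉ m.1) (hy : toDual y ∈ m.2) : E.C x y := by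
  obtain ⟨i, hi, g, hg, hgix⟩ := IdealPair.exists_not_left E.antitoneRel_notLlDual hm hx
  by_contra hxy
  refine hm.prop.rel i hi _ (hm.prop.ideal_snd.sup_mem hg hy) (E.mll2 x _ i ?_ ?_)
  · exact fun h => hxy (E.c2 _ _ _ _ h le_rfl inf_le_right)
  · exact E.ll4 _ _ _ _ inf_le_left (not_not.1 hgix) (sup_comm i x).le

theorem cd_of_maximal_notLlDual (hm : Maximal (IdealPair E.NotLlDual a (toDual b)) m) {x y : D}
    (hx : x ∈ m.1) (hy : toDual y ∉ m.2) : E.Cd x y := by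
  obtain ⟨i, hi, g, hg, hgyi⟩ := IdealPair.exists_not_right E.antitoneRel_notLlDual hm hy
  by_contra hxy
  refine hm.prop.rel _ (hm.prop.ideal_fst.sup_mem hi hx) g hg (E.mll1 y _ _ ?_ ?_)
  · exact fun h => hxy (E.cd4 _ _ (E.cd2 _ _ _ _ h le_rfl le_sup_right))
  · exact E.ll4 _ _ _ _ (inf_comm _ _).le (not_not.1 hgyi) le_sup_left

theorem not_ll_of_maximal_notLlDual (hm : Maximal (IdealPair E.NotLlDual a (toDual b)) m)
    {x y : D} (hx : x ∉ m.1) (hy : toDual y ∉ m.2) : ¬ E.Ll x y := by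
  intro hxy
  obtain ⟨i, -, g, -, hgi, hgix, hgyi⟩ :=
    IdealPair.exists_not_left_right E.antitoneRel_notLlDual hm hx hy
  refine hgi (E.ll7 x y _ i hxy ?_ ?_)
  · exact E.ll4 _ _ _ _ (inf_comm _ _).le (not_not.1 hgyi) le_rfl
  · exact E.ll4 _ _ _ _ le_rfl (not_not.1 hgix) (sup_comm _ _).le

theorem primeIdeal_fst_of_maximal_notLlDual
    (hm : Maximal (IdealPair E.NotLlDual a (toDual b)) m) : PrimeIdeal m.1 :=
  IdealPair.primeIdeal_fst E.antitoneRel_notLlDual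
    (fun _ _ _ h => not_and_or.1 fun hpq => h (E.ll6 _ _ _ hpq.1 hpq.2)) (· E.ll2) hm

theorem primeIdeal_snd_of_maximal_notLlDual
    (hm : Maximal (IdealPair E.NotLlDual a (toDual b)) m) : PrimeIdeal m.2 :=
  IdealPair.primeIdeal_snd E.antitoneRel_notLlDual
    (fun _ _ _ h => not_and_or.1 fun hpq => h (E.ll5 _ _ _ hpq.1 hpq.2)) (· E.ll1) hm

theorem exists_rc_of_not_ll (hab : ¬ E.Ll b a) :
    ∃ Γ Δ : Set D,
      PrimeFilter Γ ∧ PrimeFilter Δ ∧ a ∉ Γ ∧ b ∈ Δ ∧ Rc E Γ Δ := by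
  obtain ⟨m, hm⟩ := IdealPair.exists_maximal (b := toDual b) E.antitoneRel_notLlDual hab
  refine ⟨m.1ᶜ, toDual ⁻¹' m.2, (primeIdeal_fst_of_maximal_notLlDual hm).primeFilter_compl,
    (primeIdeal_snd_of_maximal_notLlDual hm).primeFilter_preimage_toDual,
    Set.notMem_compl_iff.2 hm.prop.mem_fst, hm.prop.mem_snd, fun x y => ?_⟩
  simp only [Set.mem_compl_iff, Set.mem_preimage, not_not]
  exact ⟨c_of_maximal_notLlDual hm, cd_of_maximal_notLlDual hm, not_ll_of_maximal_notLlDual hm,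
    fun hx hy => hm.prop.rel x hx (toDual y) hy⟩

end EDC

/-- characterizations of `Ĉ` and of `¬(b ≪ a)` via prime filters. -/
theorem stmt7 {D : Type u} [DistribLattice D] [BoundedOrder D] (E : EDC D) (a b : D) :
    (E.Cd a b ↔ ∃ Γ Δ : Set D, PrimeFilter Γ ∧ PrimeFilter Δ ∧ a ∉ Γ ∧ b ∉ Δ ∧ Rc E Γ Δ) ∧
    (¬ E.Ll b a ↔ ∃ Γ Δ : Set D, PrimeFilter Γ ∧ PrimeFilter Δ ∧ a ∉ Γ ∧ b ∈ Δ ∧ Rc E Γ Δ) :=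
  ⟨⟨E.exists_rc_of_cd, fun ⟨_, _, _, _, ha, hb, hR⟩ => (hR a b).2.1 ha hb⟩,
    ⟨E.exists_rc_of_not_ll, fun ⟨_, _, _, _, ha, hb, hR⟩ => (hR a b).2.2.2 ha hb⟩⟩
end

section
/- Let D be an EDC-lattice satisfying the axioms (U-rich ≪): a ≪ b → ∃c, b + c = 1 and ¬(a C c); and (U-rich Ĉ): ¬(a Ĉ b) → ∃c ∃d, a + c = 1, b + d = 1 and ¬(c C d). Then for all prime filters U, V of D: U R_C V if and only if U R^c V, where U R_C V means that a C b holds for all a ∈ U and b ∈ V. -/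
/-! The first clause of `R^c` is `R_C`. Conversely, assume `U R_C V`. The U-richness axioms turn
a failure of any other clause of `R^c` at `a`, `b` into a pair `¬ c C d` in which each of `c`, `d`
either is `a` or `b` itself or joins to `⊤` with an element outside the corresponding filter. A prime
filter contains one of any two elements joining to `⊤`, so `c ∈ U` and `d ∈ V`, contradicting
`U R_C V`. -/

universe u

theorem PrimeFilter.mem_of_sup_eq_top {D : Type u} [DistribLattice D] [BoundedOrder D]
    {F : Set D} (hF : PrimeFilter F) {a c : D} (hac : a ⊔ c = ⊤) (ha : a ∉ F) : c ∈ F :=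
  (hF.2.2 a c (hac ▸ hF.1.1)).resolve_left ha

namespace EDC

variable {D : Type u} [DistribLattice D] [BoundedOrder D] (E : EDC D) {U V : Set D}

theorem Cd_of_forall_C
    (hUcd : ∀ a b : D, ¬ E.Cd a b → ∃ c d : D, a ⊔ c = ⊤ ∧ b ⊔ d = ⊤ ∧ ¬ E.C c d)
    (hU : PrimeFilter U) (hV : PrimeFilter V) (hUV : ∀ a ∈ U, ∀ b ∈ V, E.C a b)
    {a b : D} (ha : a ∉ U) (hb : b ∉ V) : E.Cd a b := by
  by_contra hab
  obtain ⟨c, d, hac, hbd, hcd⟩ := hUcd a b hab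
  exact hcd (hUV c (hU.mem_of_sup_eq_top hac ha) d (hV.mem_of_sup_eq_top hbd hb))

theorem not_Ll_of_forall_C
    (hUll : ∀ a b : D, E.Ll a b → ∃ c : D, b ⊔ c = ⊤ ∧ ¬ E.C a c)
    (hV : PrimeFilter V) (hUV : ∀ a ∈ U, ∀ b ∈ V, E.C a b)
    {a b : D} (ha : a ∈ U) (hb : b ∉ V) : ¬ E.Ll a b := by
  intro hab
  obtain ⟨c, hbc, hac⟩ := hUll a b hab
  exact hac (hUV a ha c (hV.mem_of_sup_eq_top hbc hb))

end EDC

/-- under (U-rich ≪) and (U-rich Ĉ), the relation `R_C` coincides with `R^c`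
on prime filters. -/
theorem stmt10 {D : Type u} [DistribLattice D] [BoundedOrder D] (E : EDC D)
    (hUll : ∀ a b : D, E.Ll a b → ∃ c : D, b ⊔ c = ⊤ ∧ ¬ E.C a c)
    (hUcd : ∀ a b : D, ¬ E.Cd a b → ∃ c d : D, a ⊔ c = ⊤ ∧ b ⊔ d = ⊤ ∧ ¬ E.C c d)
    (U V : Set D) (hU : PrimeFilter U) (hV : PrimeFilter V) :
    (∀ a ∈ U, ∀ b ∈ V, E.C a b) ↔ Rc E U V := by
  refine ⟨fun hUV a b => ⟨fun ha hb => hUV a ha b hb, ?_, ?_, ?_⟩, fun h a ha b hb => (h a b).1 ha hb⟩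
  · exact E.Cd_of_forall_C hUcd hU hV hUV
  · exact E.not_Ll_of_forall_C hUll hV hUV
  · have hVU : ∀ b ∈ V, ∀ a ∈ U, E.C b a := fun b hb a ha => E.c4 a b (hUV a ha b hb)
    exact fun ha hb => E.not_Ll_of_forall_C hUll hU hVU hb ha
end

section
/- Transitivity lemma: Let D be an EDC-lattice satisfying the normality axioms (Nor 1): ¬(a C b) → ∃c ∃d, c + d = 1, ¬(a C c) and ¬(b C d); (Nor 2): ¬(a Ĉ b) → ∃c ∃d, c·d = 0, ¬(a Ĉ c) and ¬(b Ĉ d); and (Nor 3): a ≪ b → ∃c, a ≪ c and c ≪ b. Then the canonical relation R^c on the prime filters of D is transitive. -/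
/-! Each clause of `Γ R^c Θ` is forced through the middle filter `Δ`: if it failed, the matching
normality axiom would split the offending pair through `c ⊔ d = ⊤`, `c ⊓ d = ⊥` or `a ≪ c ≪ b`,
and deciding whether `c`, `d` lie in the prime filter `Δ` contradicts `Γ R^c Δ` or `Δ R^c Θ`. -/

universe u

namespace EDC

variable {D : Type u} [DistribLattice D] [BoundedOrder D] (E : EDC D)

def Nor1 : Prop := ∀ a b : D, ¬ E.C a b → ∃ c d : D, c ⊔ d = ⊤ ∧ ¬ E.C a c ∧ ¬ E.C b d

def Nor2 : Prop := ∀ a b : D, ¬ E.Cd a b → ∃ c d : D, c ⊓ d = ⊥ ∧ ¬ E.Cd a c ∧ ¬ E.Cd b d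

def Nor3 : Prop := ∀ a b : D, E.Ll a b → ∃ c : D, E.Ll a c ∧ E.Ll c b

end EDC

namespace Rc

variable {D : Type u} [DistribLattice D] [BoundedOrder D] {E : EDC D} {Γ Δ Θ : Set D} {a b : D}

theorem comp_C (nor1 : E.Nor1) (hΔ : PrimeFilter Δ) (h1 : Rc E Γ Δ) (h2 : Rc E Δ Θ)
    (ha : a ∈ Γ) (hb : b ∈ Θ) : E.C a b := by
  by_contra hab
  obtain ⟨c, d, hcd, hac, hbd⟩ := nor1 a b hab
  have hcdΔ : c ⊔ d ∈ Δ := hcd ▸ hΔ.1.1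
  rcases hΔ.2.2 c d hcdΔ with hc | hd
  · exact hac ((h1 a c).1 ha hc)
  · exact hbd (E.c4 _ _ ((h2 d b).1 hd hb))

theorem comp_Cd (nor2 : E.Nor2) (hΔ : PrimeFilter Δ) (h1 : Rc E Γ Δ)
    (h2 : Rc E Δ Θ) (ha : a ∉ Γ) (hb : b ∉ Θ) : E.Cd a b := by
  by_contra hab
  obtain ⟨c, d, hcd, hac, hbd⟩ := nor2 a b hab
  have hc : c ∈ Δ := by_contra fun hc => hac ((h1 a c).2.1 ha hc)
  have hd : d ∈ Δ := by_contra fun hd => hbd (E.cd4 _ _ ((h2 d b).2.1 hd hb))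
  exact hΔ.2.1 (hcd ▸ hΔ.1.2.2 c d hc hd)

theorem comp_not_Ll (nor3 : E.Nor3) (h1 : Rc E Γ Δ) (h2 : Rc E Δ Θ) (ha : a ∈ Γ)
    (hb : b ∉ Θ) : ¬ E.Ll a b := by
  intro hab
  obtain ⟨c, hac, hcb⟩ := nor3 a b hab
  by_cases hc : c ∈ Δ
  · exact (h2 c b).2.2.1 hc hb hcb
  · exact (h1 a c).2.2.1 ha hc hac

theorem comp_not_Ll_swap (nor3 : E.Nor3) (h1 : Rc E Γ Δ) (h2 : Rc E Δ Θ) (ha : a ∉ Γ)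
    (hb : b ∈ Θ) : ¬ E.Ll b a := by
  intro hba
  obtain ⟨c, hbc, hca⟩ := nor3 b a hba
  by_cases hc : c ∈ Δ
  · exact (h1 a c).2.2.2 ha hc hca
  · exact (h2 c b).2.2.2 hc hb hbc

end Rc

theorem stmt11_general {D : Type u} [DistribLattice D] [BoundedOrder D] (E : EDC D)
    (nor1 : ∀ a b : D, ¬ E.C a b → ∃ c d : D, c ⊔ d = ⊤ ∧ ¬ E.C a c ∧ ¬ E.C b d)
    (nor2 : ∀ a b : D, ¬ E.Cd a b → ∃ c d : D, c ⊓ d = ⊥ ∧ ¬ E.Cd a c ∧ ¬ E.Cd b d)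
    (nor3 : ∀ a b : D, E.Ll a b → ∃ c : D, E.Ll a c ∧ E.Ll c b)
    (Γ Δ Θ : Set D) (hΔ : PrimeFilter Δ)
    (h1 : Rc E Γ Δ) (h2 : Rc E Δ Θ) : Rc E Γ Θ :=
  fun _ _ =>
    ⟨Rc.comp_C nor1 hΔ h1 h2, Rc.comp_Cd nor2 hΔ h1 h2,
      Rc.comp_not_Ll nor3 h1 h2, Rc.comp_not_Ll_swap nor3 h1 h2⟩

/-- Transitivity lemma — under (Nor 1), (Nor 2), (Nor 3) the canonical
relation `R^c` is transitive on prime filters. -/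
theorem stmt11 {D : Type u} [DistribLattice D] [BoundedOrder D] (E : EDC D)
    (nor1 : ∀ a b : D, ¬ E.C a b → ∃ c d : D, c ⊔ d = ⊤ ∧ ¬ E.C a c ∧ ¬ E.C b d)
    (nor2 : ∀ a b : D, ¬ E.Cd a b → ∃ c d : D, c ⊓ d = ⊥ ∧ ¬ E.Cd a c ∧ ¬ E.Cd b d)
    (nor3 : ∀ a b : D, E.Ll a b → ∃ c : D, E.Ll a c ∧ E.Ll c b)
    (Γ Δ Θ : Set D) (hΓ : PrimeFilter Γ) (hΔ : PrimeFilter Δ) (hΘ : PrimeFilter Θ)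
    (h1 : Rc E Γ Δ) (h2 : Rc E Δ Θ) : Rc E Γ Θ :=
  stmt11_general E nor1 nor2 nor3 Γ Δ Θ hΔ h1 h2
end

section
/- Let D be an EDC-lattice, B a Boolean algebra equipped with a relation C' satisfying axioms (C1)–(C5), with dual contact defined in B by x Ĉ' y iff xᶜ C' yᶜ and nontangential part-of by x ≪' y iff ¬(x C' yᶜ). Let h : D → B be an injective bounded lattice homomorphism such that for all a, b ∈ D: a C b iff h(a) C' h(b), a Ĉ b iff h(a) Ĉ' h(b), and a ≪ b iff h(a) ≪' h(b). If the image h(D) is a C-separable EDC-sublattice of B, then D satisfies (U-rich ≪): a ≪ b → ∃c, b + c = 1 and ¬(a C c), and (U-rich Ĉ): ¬(a Ĉ b) → ∃c ∃d, a + c = 1, b + d = 1 and ¬(c C d). -/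
universe u

/-- `S` is a C-separable EDC-sublattice (with respect to relations `C`, `Cd`, `Ll`). -/
def CSepSub {D : Type u} [DistribLattice D] [BoundedOrder D]
    (C Cd Ll : D → D → Prop) (S : Set D) : Prop :=
  (∀ a₂ b₂ : D, ¬ C a₂ b₂ → ∃ a₁ ∈ S, ∃ b₁ ∈ S, a₂ ≤ a₁ ∧ b₂ ≤ b₁ ∧ ¬ C a₁ b₁) ∧
  (∀ a₂ b₂ : D, ¬ Cd a₂ b₂ → ∃ a₁ ∈ S, ∃ b₁ ∈ S, a₂ ⊔ a₁ = ⊤ ∧ b₂ ⊔ b₁ = ⊤ ∧ ¬ C a₁ b₁) ∧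
  (∀ a₂ b₂ : D, Ll a₂ b₂ → ∃ a₁ ∈ S, ∃ b₁ ∈ S, a₂ ≤ a₁ ∧ b₂ ⊔ b₁ = ⊤ ∧ ¬ C a₁ b₁)

theorem sup_eq_top_of_map_sup_eq_top {D B : Type*} [Max D] [Top D] [Max B] [Top B]
    {h : D → B} (hinj : Function.Injective h) (htop : h ⊤ = ⊤)
    (hsup : ∀ a b : D, h (a ⊔ b) = h a ⊔ h b) {a b : D} (hab : h a ⊔ h b = ⊤) :
    a ⊔ b = ⊤ :=
  hinj (by rw [hsup, htop, hab])

namespace EDC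

variable {D : Type u} [DistribLattice D] [BoundedOrder D] (E : EDC D)
  {B : Type*} [BooleanAlgebra B] {C' : B → B → Prop} {h : D → B}

theorem exists_sup_eq_top_not_C_of_Ll
    (c2 : ∀ x x' y y' : B, C' x y → x ≤ x' → y ≤ y' → C' x' y')
    (hinj : Function.Injective h) (htop : h ⊤ = ⊤)
    (hsup : ∀ a b : D, h (a ⊔ b) = h a ⊔ h b)
    (hC : ∀ a b : D, E.C a b → C' (h a) (h b))
    (hLl : ∀ a b : D, E.Ll a b → ¬ C' (h a) (h b)ᶜ)
    (sepLl : ∀ x y : B, ¬ C' x yᶜ →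
      ∃ x₁ ∈ Set.range h, ∃ y₁ ∈ Set.range h, x ≤ x₁ ∧ y ⊔ y₁ = ⊤ ∧ ¬ C' x₁ y₁)
    {a b : D} (hab : E.Ll a b) :
    ∃ c : D, b ⊔ c = ⊤ ∧ ¬ E.C a c := by
  obtain ⟨_, ⟨a', rfl⟩, _, ⟨c, rfl⟩, ha, hbc, hnC⟩ := sepLl (h a) (h b) (hLl a b hab)
  exact ⟨c, sup_eq_top_of_map_sup_eq_top hinj htop hsup hbc,
    fun hac => hnC (c2 _ _ _ _ (hC a c hac) ha le_rfl)⟩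

theorem exists_sup_eq_top_not_C_of_not_Cd
    (hinj : Function.Injective h) (htop : h ⊤ = ⊤)
    (hsup : ∀ a b : D, h (a ⊔ b) = h a ⊔ h b)
    (hC : ∀ a b : D, E.C a b → C' (h a) (h b))
    (hCd : ∀ a b : D, C' (h a)ᶜ (h b)ᶜ → E.Cd a b)
    (sepCd : ∀ x y : B, ¬ C' xᶜ yᶜ →
      ∃ x₁ ∈ Set.range h, ∃ y₁ ∈ Set.range h, x ⊔ x₁ = ⊤ ∧ y ⊔ y₁ = ⊤ ∧ ¬ C' x₁ y₁)
    {a b : D} (hab : ¬ E.Cd a b) :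
    ∃ c d : D, a ⊔ c = ⊤ ∧ b ⊔ d = ⊤ ∧ ¬ E.C c d := by
  obtain ⟨_, ⟨c, rfl⟩, _, ⟨d, rfl⟩, hac, hbd, hnC⟩ :=
    sepCd (h a) (h b) (fun hC' => hab (hCd a b hC'))
  exact ⟨c, d, sup_eq_top_of_map_sup_eq_top hinj htop hsup hac,
    sup_eq_top_of_map_sup_eq_top hinj htop hsup hbd, fun hcd => hnC (hC c d hcd)⟩

end EDC

theorem stmt14_general {D : Type u} [DistribLattice D] [BoundedOrder D] (E : EDC D)
    {B : Type u} [BooleanAlgebra B] (C' : B → B → Prop)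
    (c2 : ∀ x x' y y' : B, C' x y → x ≤ x' → y ≤ y' → C' x' y')
    (h : D → B) (hinj : Function.Injective h)
    (htop : h ⊤ = ⊤)
    (hsup : ∀ a b : D, h (a ⊔ b) = h a ⊔ h b)
    (hC : ∀ a b : D, E.C a b ↔ C' (h a) (h b))
    (hCd : ∀ a b : D, E.Cd a b ↔ C' (h a)ᶜ (h b)ᶜ)
    (hLl : ∀ a b : D, E.Ll a b ↔ ¬ C' (h a) (h b)ᶜ)
    (hsep : CSepSub C' (fun x y => C' xᶜ yᶜ) (fun x y => ¬ C' x yᶜ) (Set.range h)) :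
    (∀ a b : D, E.Ll a b → ∃ c : D, b ⊔ c = ⊤ ∧ ¬ E.C a c) ∧
    (∀ a b : D, ¬ E.Cd a b → ∃ c d : D, a ⊔ c = ⊤ ∧ b ⊔ d = ⊤ ∧ ¬ E.C c d) := by
  obtain ⟨-, sepCd, sepLl⟩ := hsep
  have hC' : ∀ a b : D, E.C a b → C' (h a) (h b) := fun a b => (hC a b).1
  exact ⟨fun _ _ => E.exists_sup_eq_top_not_C_of_Ll c2 hinj htop hsup hC'
      (fun a b => (hLl a b).1) sepLl,
    fun _ _ => E.exists_sup_eq_top_not_C_of_not_Cd hinj htop hsup hC'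
      (fun a b => (hCd a b).2) sepCd⟩

/-- if an EDC-lattice embeds into a contact algebra with C-separable image,
then it satisfies (U-rich ≪) and (U-rich Ĉ). -/
theorem stmt14 {D : Type u} [DistribLattice D] [BoundedOrder D] (E : EDC D)
    {B : Type u} [BooleanAlgebra B] (C' : B → B → Prop)
    (c1 : ∀ x y : B, C' x y → x ≠ ⊥ ∧ y ≠ ⊥)
    (c2 : ∀ x x' y y' : B, C' x y → x ≤ x' → y ≤ y' → C' x' y')
    (c3 : ∀ x y z : B, C' x (y ⊔ z) → C' x y ∨ C' x z)
    (c4 : ∀ x y : B, C' x y → C' y x)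
    (c5 : ∀ x y : B, x ⊓ y ≠ ⊥ → C' x y)
    (h : D → B) (hinj : Function.Injective h)
    (hbot : h ⊥ = ⊥) (htop : h ⊤ = ⊤)
    (hsup : ∀ a b : D, h (a ⊔ b) = h a ⊔ h b) (hinf : ∀ a b : D, h (a ⊓ b) = h a ⊓ h b)
    (hC : ∀ a b : D, E.C a b ↔ C' (h a) (h b))
    (hCd : ∀ a b : D, E.Cd a b ↔ C' (h a)ᶜ (h b)ᶜ)
    (hLl : ∀ a b : D, E.Ll a b ↔ ¬ C' (h a) (h b)ᶜ)
    (hsep : CSepSub C' (fun x y => C' xᶜ yᶜ) (fun x y => ¬ C' x yᶜ) (Set.range h)) :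
    (∀ a b : D, E.Ll a b → ∃ c : D, b ⊔ c = ⊤ ∧ ¬ E.C a c) ∧
    (∀ a b : D, ¬ E.Cd a b → ∃ c d : D, a ⊔ c = ⊤ ∧ b ⊔ d = ⊤ ∧ ¬ E.C c d) :=
  stmt14_general E C' c2 h hinj htop hsup hC hCd hLl hsep
end

section
/- Topological representation theorem for U-rich EDC-lattices: Let D be an EDC-lattice satisfying (Ext Ô): a ≰ b → ∃c, a + c = 1 and b + c ≠ 1; (U-rich ≪): a ≪ b → ∃c, b + c = 1 and ¬(a C c); and (U-rich Ĉ): ¬(a Ĉ b) → ∃c ∃d, a + c = 1, b + d = 1 and ¬(c C d). Then there exist a topological space X which is compact, T0 and semiregular (every closed subset of X is an intersection of regular closed sets), and a map h : D → (subsets of X) such that: every h(a) is regular closed; h is injective; h(0) = ∅, h(1) = X; h(a+b) = h(a) ∪ h(b); h(a·b) = Cl(Int(h(a) ∩ h(b))); a ≤ b iff h(a) ⊆ h(b); a C b iff h(a) ∩ h(b) ≠ ∅; a Ĉ b iff Int(h(a)) ∪ Int(h(b)) ≠ X; a ≪ b iff h(a) ⊆ Int(h(b)); h is dually dense: for every regular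 closed α ≠ X there exists a ∈ D with α ⊆ h(a) and h(a) ≠ X; and h is C-separable: (for C) for all regular closed α, β with α ∩ β = ∅ there exist a, b ∈ D with α ⊆ h(a), β ⊆ h(b) and h(a) ∩ h(b) = ∅; (for Ĉ) for all regular closed α, β with Cl(X∖α) ∩ Cl(X∖β) = ∅ there exist a, b ∈ D with α ∪ h(a) = X, β ∪ h(b) = X and h(a) ∩ h(b) = ∅; (for ≪) for all regular closed α, β with α ⊆ Int(β) there exist a, b ∈ D with α ⊆ h(a), β ∪ h(b) = X and h(a) ∩ h(b) = ∅. -/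
universe u

/-! The points of the space are the clans of `D`: upward closed, prime sets containing `⊤`
whose elements are pairwise in contact, and `a` is represented by the closed set of clans
containing it. Prime filters are clans, and any two filters in mutual contact lie in a
common clan, namely the union of two prime filters that extend them and keep the contact;
this gives the forward directions of the representation of `C`, `Ĉ` and `≪`, and the
U-richness conditions give the converses. (Ext Ô) makes every represented set regular
closed, so a regular closed set lying in the sets of `a` and of `b` lies in the set of
`a ⊓ b`; the separation properties then follow from compactness (an ultrafilter converges
to the clan of the basic closed sets it contains). -/

theorem IsOpen.closure_interior_closure {X : Type*} [TopologicalSpace X] {U : Set X}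
    (hU : IsOpen U) : closure (interior (closure U)) = closure U := by
  simpa only [hU.interior_eq] using closure_interior_idem (s := U)

section PrimeFilters

variable {D : Type u} [DistribLattice D] [BoundedOrder D]

theorem edcFilter_Ici (a : D) : EDCFilter (Set.Ici a) :=
  ⟨le_top, fun _ _ hx hxy => le_trans hx hxy, fun _ _ hx hy => le_inf hx hy⟩

theorem edcFilter_sup_eq_top (b : D) : EDCFilter {c | b ⊔ c = ⊤} := by
  refine ⟨sup_top_eq b, fun c c' hc hcc' => top_le_iff.1 (hc ▸ sup_le_sup_left hcc' b), ?_⟩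
  intro c c' (hc : b ⊔ c = ⊤) (hc' : b ⊔ c' = ⊤)
  rw [Set.mem_ofPred_eq, sup_inf_left, hc, hc', inf_top_eq]

theorem edcIdeal_Iic (b : D) : EDCIdeal (Set.Iic b) :=
  ⟨bot_le, fun _ _ hx hyx => le_trans hyx hx, fun _ _ hx hy => sup_le hx hy⟩

theorem exists_primeFilter_of_disjoint {F I : Set D} (hF : EDCFilter F) (hI : EDCIdeal I)
    (hFI : Disjoint F I) : ∃ P, PrimeFilter P ∧ F ⊆ P ∧ Disjoint P I := by
  have hF' : Order.IsPFilter F := .of_def ⟨⊤, hF.1⟩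
    (fun x hx y hy => ⟨x ⊓ y, hF.2.2 x y hx hy, inf_le_left, inf_le_right⟩)
    (fun hxy hx => hF.2.1 _ _ hx hxy)
  have hI' : Order.IsIdeal I := ⟨fun x y hyx hx => hI.2.1 x y hx hyx, ⟨⊥, hI.1⟩,
    fun x hx y hy => ⟨x ⊔ y, hI.2.2 x y hx hy, le_sup_left, le_sup_right⟩⟩
  obtain ⟨J, hJ, hIJ, hFJ⟩ :=
    DistribLattice.prime_ideal_of_disjoint_filter_ideal (F := hF'.toPFilter) (I := hI'.toIdeal)
      hFI
  refine ⟨(J : Set D)ᶜ, ⟨⟨hJ.top_notMem, fun _ _ hx hxy => Order.Ideal.mem_compl_of_ge hxy hx,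
    fun _ _ hx hy hxy => (hJ.mem_or_mem hxy).elim hx hy⟩, not_not.2 J.bot_mem,
    fun _ _ hab => not_and_or.1 fun h => hab (J.sup_mem h.1 h.2)⟩,
    hFJ.subset_compl_right, Set.disjoint_compl_left_iff_subset.2 hIJ⟩

theorem exists_primeFilter_of_not_le {a b : D} (h : ¬ a ≤ b) :
    ∃ P, PrimeFilter P ∧ a ∈ P ∧ b ∉ P := by
  obtain ⟨P, hP, haP, hPb⟩ := exists_primeFilter_of_disjoint (edcFilter_Ici a) (edcIdeal_Iic b)
    (Set.disjoint_left.2 fun x hax hxb => h (le_trans hax hxb))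
  exact ⟨P, hP, haP le_rfl, fun hb => Set.disjoint_left.1 hPb hb le_rfl⟩

end PrimeFilters

/-- (Ext Ô), where `a Ô b` stands for `a ⊔ b ≠ ⊤`. -/
def DualOverlapExtensional (D : Type u) [DistribLattice D] [BoundedOrder D] : Prop :=
  ∀ a b : D, ¬ a ≤ b → ∃ c, a ⊔ c = ⊤ ∧ b ⊔ c ≠ ⊤

namespace EDC

variable {D : Type u} [DistribLattice D] [BoundedOrder D] (E : EDC D)

theorem C_of_Cd {a b c d : D} (h : E.Cd a b) (hc : a ⊔ c = ⊤) (hd : b ⊔ d = ⊤) : E.C c d :=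
  E.mcd2 a b d c (fun h' => (E.cd1 _ _ h').2 hd) h (fun h' => (E.cd1 _ _ h').1 hc)

theorem C_of_not_Ll {a b c : D} (h : ¬ E.Ll a b) (hc : b ⊔ c = ⊤) : E.C a c := by
  by_contra hac
  have hLl : E.Ll a (c ⊔ b) := E.ll4 ⊤ a ⊤ _ le_top E.ll2 (by rw [sup_comm, hc])
  exact h (E.mll2 c a b (mt (E.c4 c a) hac) hLl)

theorem edcIdeal_not_C {G : Set D} (hG : EDCFilter G) : EDCIdeal {z | ∃ y ∈ G, ¬ E.C z y} := by
  refine ⟨⟨⊤, hG.1, fun h => (E.c1 _ _ h).1 rfl⟩, ?_, ?_⟩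
  · rintro z w ⟨y, hy, hzy⟩ hwz
    exact ⟨y, hy, fun hwy => hzy (E.c2 w z y y hwy hwz le_rfl)⟩
  · rintro z₁ z₂ ⟨y₁, hy₁, h₁⟩ ⟨y₂, hy₂, h₂⟩
    refine ⟨y₁ ⊓ y₂, hG.2.2 _ _ hy₁ hy₂, fun h => ?_⟩
    rcases E.c3 _ _ _ (E.c4 _ _ h) with h | h
    · exact h₁ (E.c2 _ _ _ _ (E.c4 _ _ h) le_rfl inf_le_left)
    · exact h₂ (E.c2 _ _ _ _ (E.c4 _ _ h) le_rfl inf_le_right)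

theorem exists_primeFilter_of_contact {F G : Set D} (hF : EDCFilter F) (hG : EDCFilter G)
    (H : ∀ x ∈ F, ∀ y ∈ G, E.C x y) :
    ∃ P, PrimeFilter P ∧ F ⊆ P ∧ ∀ x ∈ P, ∀ y ∈ G, E.C x y := by
  obtain ⟨P, hP, hFP, hPI⟩ := exists_primeFilter_of_disjoint hF (E.edcIdeal_not_C hG)
    (Set.disjoint_left.2 fun x hx ⟨y, hy, hxy⟩ => hxy (H x hx y hy))
  exact ⟨P, hP, hFP, fun x hx y hy => by_contra fun h => Set.disjoint_left.1 hPI hx ⟨y, hy, h⟩⟩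

structure IsClan (Γ : Set D) : Prop where
  top_mem : ⊤ ∈ Γ
  mem_of_le {a b : D} : a ∈ Γ → a ≤ b → b ∈ Γ
  mem_or_mem {a b : D} : a ⊔ b ∈ Γ → a ∈ Γ ∨ b ∈ Γ
  C_of_mem {a b : D} : a ∈ Γ → b ∈ Γ → E.C a b

theorem isClan_of_primeFilter {P : Set D} (hP : PrimeFilter P) : E.IsClan P where
  top_mem := hP.1.1
  mem_of_le ha hab := hP.1.2.1 _ _ ha hab
  mem_or_mem := hP.2.2 _ _
  C_of_mem ha hb := E.c5 _ _ fun h => hP.2.1 (h ▸ hP.1.2.2 _ _ ha hb)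

variable {E} in
theorem IsClan.union {Γ Δ : Set D} (hΓ : E.IsClan Γ) (hΔ : E.IsClan Δ)
    (H : ∀ a ∈ Γ, ∀ b ∈ Δ, E.C a b) : E.IsClan (Γ ∪ Δ) where
  top_mem := Or.inl hΓ.top_mem
  mem_of_le {a b} ha hab := ha.imp (hΓ.mem_of_le · hab) (hΔ.mem_of_le · hab)
  mem_or_mem {a b} h := h.elim (fun h => (hΓ.mem_or_mem h).imp .inl .inl)
    (fun h => (hΔ.mem_or_mem h).imp .inr .inr)
  C_of_mem {a b} ha hb := by
    rcases ha with ha | ha <;> rcases hb with hb | hb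
    exacts [hΓ.C_of_mem ha hb, H a ha b hb, E.c4 _ _ (H b hb a ha), hΔ.C_of_mem ha hb]

/-- Two filters in mutual contact lie in a common clan: extend each in turn to a prime filter
that keeps the contact with the other one. -/
theorem exists_isClan_of_contact {F G : Set D} (hF : EDCFilter F) (hG : EDCFilter G)
    (H : ∀ x ∈ F, ∀ y ∈ G, E.C x y) : ∃ Γ, E.IsClan Γ ∧ F ⊆ Γ ∧ G ⊆ Γ := by
  obtain ⟨P, hP, hFP, hPG⟩ := E.exists_primeFilter_of_contact hF hG H
  obtain ⟨Q, hQ, hGQ, hQP⟩ := E.exists_primeFilter_of_contact hG hP.1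
    fun y hy x hx => E.c4 _ _ (hPG x hx y hy)
  exact ⟨P ∪ Q, (E.isClan_of_primeFilter hP).union (E.isClan_of_primeFilter hQ)
      (fun x hx y hy => E.c4 _ _ (hQP y hy x hx)),
    hFP.trans Set.subset_union_left, hGQ.trans Set.subset_union_right⟩

def Clan : Type u := {Γ : Set D // E.IsClan Γ}

def clanSet (a : D) : Set E.Clan := {Γ | a ∈ Γ.1}

theorem clanSet_top : E.clanSet ⊤ = Set.univ :=
  Set.eq_univ_of_forall fun Γ => Γ.2.top_mem

theorem clanSet_bot : E.clanSet ⊥ = ∅ :=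
  Set.eq_empty_of_forall_notMem fun Γ h => (E.c1 _ _ (Γ.2.C_of_mem h h)).1 rfl

theorem clanSet_sup (a b : D) : E.clanSet (a ⊔ b) = E.clanSet a ∪ E.clanSet b :=
  Set.ext fun Γ => ⟨Γ.2.mem_or_mem,
    fun h => h.elim (Γ.2.mem_of_le · le_sup_left) (Γ.2.mem_of_le · le_sup_right)⟩

theorem clanSet_mono : Monotone E.clanSet := fun _ _ hab Γ h => Γ.2.mem_of_le h hab

theorem clanSet_subset_clanSet {a b : D} : E.clanSet a ⊆ E.clanSet b ↔ a ≤ b := by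
  refine ⟨fun h => by_contra fun hab => ?_, fun hab => E.clanSet_mono hab⟩
  obtain ⟨P, hP, haP, hbP⟩ := exists_primeFilter_of_not_le hab
  exact hbP (h (show (⟨P, E.isClan_of_primeFilter hP⟩ : E.Clan) ∈ E.clanSet a from haP))

theorem clanSet_injective : Function.Injective E.clanSet := fun _ _ h =>
  le_antisymm (E.clanSet_subset_clanSet.1 h.le) (E.clanSet_subset_clanSet.1 h.ge)

theorem clanSet_eq_univ {a : D} : E.clanSet a = Set.univ ↔ a = ⊤ := by
  rw [← E.clanSet_top, ← E.clanSet_injective.eq_iff]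

instance : TopologicalSpace E.Clan := .generateFrom (Set.range fun a => (E.clanSet a)ᶜ)

theorem isTopologicalBasis_compl_clanSet :
    TopologicalSpace.IsTopologicalBasis (Set.range fun a => (E.clanSet a)ᶜ) := by
  refine ⟨?_, ?_, rfl⟩
  · rintro _ ⟨a, rfl⟩ _ ⟨b, rfl⟩ Γ hΓ
    have h : (E.clanSet (a ⊔ b))ᶜ = (E.clanSet a)ᶜ ∩ (E.clanSet b)ᶜ := by
      rw [clanSet_sup, Set.compl_union]
    exact ⟨_, ⟨a ⊔ b, rfl⟩, h.symm.subset hΓ, h.subset⟩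
  · exact Set.sUnion_eq_univ_iff.2 fun Γ => ⟨_, ⟨⊥, rfl⟩, by simp [clanSet_bot]⟩

theorem isClosed_clanSet (a : D) : IsClosed (E.clanSet a) :=
  isOpen_compl_iff.1 (E.isTopologicalBasis_compl_clanSet.isOpen ⟨a, rfl⟩)

theorem closure_eq_biInter_clanSet (s : Set E.Clan) :
    closure s = ⋂ a ∈ {a | s ⊆ E.clanSet a}, E.clanSet a := by
  refine subset_antisymm (Set.subset_iInter₂ fun a ha =>
    (E.isClosed_clanSet a).closure_subset_iff.2 ha) fun Γ hΓ => ?_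
  rw [E.isTopologicalBasis_compl_clanSet.mem_closure_iff]
  rintro _ ⟨a, rfl⟩ hΓa
  by_contra hs
  exact hΓa (Set.mem_iInter₂.1 hΓ a fun Δ hΔ => by_contra fun h => hs ⟨Δ, h, hΔ⟩)

theorem mem_of_forall_subset_clanSet {s : Set E.Clan} (hs : IsClosed s) {Γ : E.Clan}
    (h : ∀ a, s ⊆ E.clanSet a → Γ ∈ E.clanSet a) : Γ ∈ s := by
  rw [← hs.closure_eq, closure_eq_biInter_clanSet]
  exact Set.mem_iInter₂.2 h

theorem eq_sInter_image_clanSet {F : Set E.Clan} (hF : IsClosed F) :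
    F = ⋂₀ (E.clanSet '' {a | F ⊆ E.clanSet a}) := by
  rw [Set.sInter_image, ← E.closure_eq_biInter_clanSet, hF.closure_eq]

theorem exists_clanSet_ne_univ {α : Set E.Clan} (hα : IsClosed α) (hne : α ≠ Set.univ) :
    ∃ a, α ⊆ E.clanSet a ∧ E.clanSet a ≠ Set.univ := by
  obtain ⟨Γ, hΓ⟩ := (Set.ne_univ_iff_exists_notMem α).1 hne
  by_contra! h
  exact hΓ (E.mem_of_forall_subset_clanSet hα fun a ha => h a ha ▸ trivial)

theorem compl_clanSet_subset_clanSet {b c : D} :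
    (E.clanSet c)ᶜ ⊆ E.clanSet b ↔ b ⊔ c = ⊤ := by
  rw [Set.compl_subset_iff_union, Set.union_comm, ← clanSet_sup, clanSet_eq_univ]

theorem mem_interior_clanSet {b : D} {Γ : E.Clan} :
    Γ ∈ interior (E.clanSet b) ↔ ∃ c, b ⊔ c = ⊤ ∧ c ∉ Γ.1 := by
  rw [mem_interior_iff_mem_nhds, E.isTopologicalBasis_compl_clanSet.mem_nhds_iff]
  simp only [Set.exists_range_iff, compl_clanSet_subset_clanSet]
  exact exists_congr fun c => and_comm

theorem interior_clanSet_inf (a b : D) :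
    interior (E.clanSet (a ⊓ b)) = interior (E.clanSet a ∩ E.clanSet b) := by
  refine subset_antisymm (interior_mono (Set.subset_inter (E.clanSet_mono inf_le_left)
    (E.clanSet_mono inf_le_right))) ?_
  rintro Γ hΓ
  rw [interior_inter] at hΓ
  obtain ⟨⟨c, hac, hcΓ⟩, ⟨d, hbd, hdΓ⟩⟩ := And.imp E.mem_interior_clanSet.1
    E.mem_interior_clanSet.1 hΓ
  refine E.mem_interior_clanSet.2 ⟨c ⊔ d, ?_, fun h => (Γ.2.mem_or_mem h).elim hcΓ hdΓ⟩
  rw [sup_inf_right, eq_top_mono (sup_le_sup_left le_sup_left a) hac,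
    eq_top_mono (sup_le_sup_left le_sup_right b) hbd, inf_top_eq]

instance : T0Space E.Clan :=
  ⟨fun _ _ h => Subtype.ext <| Set.ext fun a =>
    not_iff_not.1 (inseparable_iff_forall_isOpen.1 h _ (E.isClosed_clanSet a).isOpen_compl)⟩

theorem isClan_setOf_clanSet_mem (𝒰 : Ultrafilter E.Clan) : E.IsClan {a | E.clanSet a ∈ 𝒰} where
  top_mem := by rw [Set.mem_ofPred_eq, clanSet_top]; exact Filter.univ_mem
  mem_of_le ha hab := Filter.mem_of_superset ha (E.clanSet_mono hab)
  mem_or_mem h := Ultrafilter.union_mem_iff.1 (E.clanSet_sup _ _ ▸ h)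
  C_of_mem ha hb := by
    obtain ⟨Γ, hΓa, hΓb⟩ := 𝒰.nonempty_of_mem (Filter.inter_mem ha hb)
    exact Γ.2.C_of_mem hΓa hΓb

/-- An ultrafilter `𝒰` converges to the clan `{a | clanSet a ∈ 𝒰}`. -/
instance : CompactSpace E.Clan := by
  refine ⟨isCompact_iff_ultrafilter_le_nhds.2 fun 𝒰 _ =>
    ⟨(⟨_, E.isClan_setOf_clanSet_mem 𝒰⟩ : E.Clan), trivial, ?_⟩⟩
  refine E.isTopologicalBasis_compl_clanSet.nhds_hasBasis.ge_iff.2 ?_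
  rintro _ ⟨⟨a, rfl⟩, ha⟩
  exact Ultrafilter.compl_mem_iff_notMem.2 ha

theorem C_iff_clanSet_inter_ne_empty {a b : D} :
    E.C a b ↔ E.clanSet a ∩ E.clanSet b ≠ ∅ := by
  rw [← Set.nonempty_iff_ne_empty]
  refine ⟨fun h => ?_, fun ⟨Γ, ha, hb⟩ => Γ.2.C_of_mem ha hb⟩
  obtain ⟨Γ, hΓ, haΓ, hbΓ⟩ := E.exists_isClan_of_contact (edcFilter_Ici a) (edcFilter_Ici b)
    fun x hx y hy => E.c2 a x b y h hx hy
  exact ⟨⟨Γ, hΓ⟩, haΓ le_rfl, hbΓ le_rfl⟩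

theorem Cd_iff_interior_clanSet_union_ne_univ
    (hUcd : ∀ a b : D, ¬ E.Cd a b → ∃ c d, a ⊔ c = ⊤ ∧ b ⊔ d = ⊤ ∧ ¬ E.C c d) {a b : D} :
    E.Cd a b ↔ interior (E.clanSet a) ∪ interior (E.clanSet b) ≠ Set.univ := by
  refine ⟨fun h huniv => ?_, fun h => by_contra fun hab => h ?_⟩
  · obtain ⟨Γ, hΓ, haΓ, hbΓ⟩ := E.exists_isClan_of_contact (edcFilter_sup_eq_top a)
      (edcFilter_sup_eq_top b) fun c hc d hd => E.C_of_Cd h hc hd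
    rcases huniv.symm ▸ Set.mem_univ (⟨Γ, hΓ⟩ : E.Clan) with h | h <;>
      obtain ⟨c, hc, hcΓ⟩ := E.mem_interior_clanSet.1 h
    exacts [hcΓ (haΓ hc), hcΓ (hbΓ hc)]
  · obtain ⟨c, d, hc, hd, hcd⟩ := hUcd a b hab
    refine Set.eq_univ_of_forall fun Γ => ?_
    by_cases hcΓ : c ∈ Γ.1
    · exact Or.inr (E.mem_interior_clanSet.2 ⟨d, hd, fun hdΓ => hcd (Γ.2.C_of_mem hcΓ hdΓ)⟩)
    · exact Or.inl (E.mem_interior_clanSet.2 ⟨c, hc, hcΓ⟩)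

theorem Ll_iff_clanSet_subset_interior
    (hUll : ∀ a b : D, E.Ll a b → ∃ c, b ⊔ c = ⊤ ∧ ¬ E.C a c) {a b : D} :
    E.Ll a b ↔ E.clanSet a ⊆ interior (E.clanSet b) := by
  refine ⟨fun h Γ hΓ => ?_, fun h => by_contra fun hab => ?_⟩
  · obtain ⟨c, hc, hac⟩ := hUll a b h
    exact E.mem_interior_clanSet.2 ⟨c, hc, fun hcΓ => hac (Γ.2.C_of_mem hΓ hcΓ)⟩
  · obtain ⟨Γ, hΓ, haΓ, hbΓ⟩ := E.exists_isClan_of_contact (edcFilter_Ici a)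
      (edcFilter_sup_eq_top b) fun x hx c hc => E.c2 a x c c (E.C_of_not_Ll hab hc) hx le_rfl
    obtain ⟨c, hc, hcΓ⟩ :=
      E.mem_interior_clanSet.1 (h (show (⟨Γ, hΓ⟩ : E.Clan) ∈ E.clanSet a from haΓ le_rfl))
    exact hcΓ (hbΓ hc)

theorem closure_interior_clanSet (hExt : DualOverlapExtensional D) (b : D) :
    closure (interior (E.clanSet b)) = E.clanSet b := by
  refine subset_antisymm (E.isClosed_clanSet b).closure_interior_subset ?_
  rw [closure_eq_biInter_clanSet]
  refine Set.subset_iInter₂ fun a ha => E.clanSet_mono (by_contra fun hba => ?_)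
  obtain ⟨c, hbc, hac⟩ := hExt b a hba
  obtain ⟨Γ, hΓ⟩ := Set.ne_univ_iff_exists_notMem _ |>.1 (mt E.clanSet_eq_univ.1 hac)
  rw [clanSet_sup, Set.mem_union, not_or] at hΓ
  exact hΓ.1 (ha (E.mem_interior_clanSet.2 ⟨c, hbc, hΓ.2⟩))

theorem clanSet_inf (hExt : DualOverlapExtensional D) (a b : D) :
    E.clanSet (a ⊓ b) = closure (interior (E.clanSet a ∩ E.clanSet b)) := by
  rw [← interior_clanSet_inf, E.closure_interior_clanSet hExt]

theorem subset_clanSet_inf (hExt : DualOverlapExtensional D) {α : Set E.Clan}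
    (hα : closure (interior α) = α) {a b : D} (ha : α ⊆ E.clanSet a) (hb : α ⊆ E.clanSet b) :
    α ⊆ E.clanSet (a ⊓ b) :=
  calc α = closure (interior α) := hα.symm
    _ ⊆ closure (interior (E.clanSet a ∩ E.clanSet b)) :=
      closure_mono (interior_mono (Set.subset_inter ha hb))
    _ = E.clanSet (a ⊓ b) := (E.clanSet_inf hExt a b).symm

/-- By compactness, applied to the directed family `clanSet a ∩ clanSet b` over all
`α ⊆ clanSet a`, `β ⊆ clanSet b`, whose intersection is `α ∩ β`. -/
theorem exists_clanSet_separation (hExt : DualOverlapExtensional D) {α β : Set E.Clan}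
    (hα : closure (interior α) = α) (hβ : closure (interior β) = β) (hαβ : α ∩ β = ∅) :
    ∃ a b, α ⊆ E.clanSet a ∧ β ⊆ E.clanSet b ∧ E.clanSet a ∩ E.clanSet b = ∅ := by
  let ι := {p : D × D // α ⊆ E.clanSet p.1 ∧ β ⊆ E.clanSet p.2}
  have : Nonempty ι := ⟨⟨(⊤, ⊤), by simp only [clanSet_top, Set.subset_univ, and_self]⟩⟩
  have hinter : Set.univ ∩ ⋂ p : ι, E.clanSet p.1.1 ∩ E.clanSet p.1.2 = ∅ := by
    refine Set.eq_empty_of_forall_notMem fun Γ ⟨_, hΓ⟩ =>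
      hαβ.subset (show Γ ∈ α ∩ β from ⟨?_, ?_⟩)
    · refine E.mem_of_forall_subset_clanSet (hα ▸ isClosed_closure) fun a ha => ?_
      exact (Set.mem_iInter.1 hΓ ⟨(a, ⊤), ha, by simp only [clanSet_top, Set.subset_univ]⟩).1
    · refine E.mem_of_forall_subset_clanSet (hβ ▸ isClosed_closure) fun b hb => ?_
      exact (Set.mem_iInter.1 hΓ ⟨(⊤, b), by simp only [clanSet_top, Set.subset_univ], hb⟩).2
  have hdir : Directed (· ⊇ ·) fun p : ι => E.clanSet p.1.1 ∩ E.clanSet p.1.2 := by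
    rintro ⟨p, hp₁, hp₂⟩ ⟨q, hq₁, hq₂⟩
    refine ⟨⟨(p.1 ⊓ q.1, p.2 ⊓ q.2), E.subset_clanSet_inf hExt hα hp₁ hq₁,
      E.subset_clanSet_inf hExt hβ hp₂ hq₂⟩, ?_, ?_⟩ <;>
      exact Set.inter_subset_inter (E.clanSet_mono (by simp)) (E.clanSet_mono (by simp))
  obtain ⟨⟨⟨a, b⟩, ha, hb⟩, hab⟩ := isCompact_univ.elim_directed_family_closed _
    (fun _ => (E.isClosed_clanSet _).inter (E.isClosed_clanSet _)) hinter hdir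
  exact ⟨a, b, ha, hb, by simpa using hab⟩

theorem exists_clanSet_dual_separation (hExt : DualOverlapExtensional D) {α β : Set E.Clan}
    (hα : closure (interior α) = α) (hβ : closure (interior β) = β)
    (hαβ : closure αᶜ ∩ closure βᶜ = ∅) :
    ∃ a b, α ∪ E.clanSet a = Set.univ ∧ β ∪ E.clanSet b = Set.univ ∧
      E.clanSet a ∩ E.clanSet b = ∅ := by
  obtain ⟨a, b, ha, hb, hab⟩ := E.exists_clanSet_separation hExt
    (hα ▸ isClosed_closure).isOpen_compl.closure_interior_closure
    (hβ ▸ isClosed_closure).isOpen_compl.closure_interior_closure hαβ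
  exact ⟨a, b, Set.compl_subset_iff_union.1 (subset_closure.trans ha),
    Set.compl_subset_iff_union.1 (subset_closure.trans hb), hab⟩

theorem exists_clanSet_separation_of_subset_interior (hExt : DualOverlapExtensional D)
    {α β : Set E.Clan} (hα : closure (interior α) = α) (hβ : closure (interior β) = β)
    (hαβ : α ⊆ interior β) :
    ∃ a b, α ⊆ E.clanSet a ∧ β ∪ E.clanSet b = Set.univ ∧ E.clanSet a ∩ E.clanSet b = ∅ := by
  have hdisj : α ∩ closure βᶜ = ∅ := by
    rwa [closure_compl, ← Set.sdiff_eq, Set.sdiff_eq_empty]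
  obtain ⟨a, b, ha, hb, hab⟩ := E.exists_clanSet_separation hExt hα
    (hβ ▸ isClosed_closure).isOpen_compl.closure_interior_closure hdisj
  exact ⟨a, b, ha, Set.compl_subset_iff_union.1 (subset_closure.trans hb), hab⟩

end EDC

/-- topological representation theorem for U-rich EDC-lattices. -/
theorem stmt16 {D : Type u} [DistribLattice D] [BoundedOrder D] (E : EDC D)
    (hExtO : ∀ a b : D, ¬ a ≤ b → ∃ c : D, a ⊔ c = ⊤ ∧ b ⊔ c ≠ ⊤)
    (hUll : ∀ a b : D, E.Ll a b → ∃ c : D, b ⊔ c = ⊤ ∧ ¬ E.C a c)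
    (hUcd : ∀ a b : D, ¬ E.Cd a b → ∃ c d : D, a ⊔ c = ⊤ ∧ b ⊔ d = ⊤ ∧ ¬ E.C c d) :
    ∃ (X : Type u) (_ : TopologicalSpace X) (h : D → Set X),
      CompactSpace X ∧ T0Space X ∧
      (∀ F : Set X, IsClosed F →
        ∃ S : Set (Set X), (∀ s ∈ S, closure (interior s) = s) ∧ F = ⋂₀ S) ∧
      (∀ a : D, closure (interior (h a)) = h a) ∧
      Function.Injective h ∧
      h ⊥ = ∅ ∧ h ⊤ = Set.univ ∧
      (∀ a b : D, h (a ⊔ b) = h a ∪ h b) ∧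
      (∀ a b : D, h (a ⊓ b) = closure (interior (h a ∩ h b))) ∧
      (∀ a b : D, a ≤ b ↔ h a ⊆ h b) ∧
      (∀ a b : D, E.C a b ↔ h a ∩ h b ≠ ∅) ∧
      (∀ a b : D, E.Cd a b ↔ interior (h a) ∪ interior (h b) ≠ Set.univ) ∧
      (∀ a b : D, E.Ll a b ↔ h a ⊆ interior (h b)) ∧
      (∀ α : Set X, closure (interior α) = α → α ≠ Set.univ →
        ∃ a : D, α ⊆ h a ∧ h a ≠ Set.univ) ∧
      (∀ α β : Set X, closure (interior α) = α → closure (interior β) = β →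
        α ∩ β = ∅ → ∃ a b : D, α ⊆ h a ∧ β ⊆ h b ∧ h a ∩ h b = ∅) ∧
      (∀ α β : Set X, closure (interior α) = α → closure (interior β) = β →
        closure αᶜ ∩ closure βᶜ = ∅ →
        ∃ a b : D, α ∪ h a = Set.univ ∧ β ∪ h b = Set.univ ∧ h a ∩ h b = ∅) ∧
      (∀ α β : Set X, closure (interior α) = α → closure (interior β) = β →
        α ⊆ interior β →
        ∃ a b : D, α ⊆ h a ∧ β ∪ h b = Set.univ ∧ h a ∩ h b = ∅) := by
  refine ⟨E.Clan, inferInstance, E.clanSet, inferInstance, inferInstance,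
    fun F hF => ⟨_, ?_, E.eq_sInter_image_clanSet hF⟩, E.closure_interior_clanSet hExtO,
    E.clanSet_injective, E.clanSet_bot, E.clanSet_top, E.clanSet_sup, E.clanSet_inf hExtO,
    fun _ _ => E.clanSet_subset_clanSet.symm, fun _ _ => E.C_iff_clanSet_inter_ne_empty,
    fun _ _ => E.Cd_iff_interior_clanSet_union_ne_univ hUcd,
    fun _ _ => E.Ll_iff_clanSet_subset_interior hUll,
    fun _ hα => E.exists_clanSet_ne_univ (hα ▸ isClosed_closure),
    fun _ _ => E.exists_clanSet_separation hExtO,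
    fun _ _ => E.exists_clanSet_dual_separation hExtO,
    fun _ _ => E.exists_clanSet_separation_of_subset_interior hExtO⟩
  rintro _ ⟨a, -, rfl⟩
  exact E.closure_interior_clanSet hExtO a
end
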